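/- arXiv:2404.01279 — 3 statements merged into one kernel-verified Lean document; each statement's English description precedes it below -/
import Mathlib

section
/- (Optimal flux function) Let K be an admissible d-complex on a finite vertex set S with facets F₁,…,F_n. Then there exists a flux function φ on S in dimension d satisfying the unit-flux constraint such that φ(F₁) + ⋯ + φ(F_n) = V_ℚ(K). -/
/-!
Framework: oriented simplicial chains on a finite vertex set.

An oriented `n`-simplex on a vertex set `V` is an `(n+1)`-tuple of distinct vertices
up to even permutation; an odd permutation yields the oppositely oriented simplex.
An `n`-chain with coefficients in `R` is encoded as an *alternating* function
`c : (Fin (n+1) → V) → R`: the value `c f` is the coefficient of the oriented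
simplex represented by the tuple `f`, and reversing orientation negates it.
-/

/-- `c` is an `n`-chain: it is alternating under permutations of the tuple
(so an oriented simplex and its orientation reversal are identified up to sign). -/
def IsAltChain {V : Type*} (n : ℕ) {R : Type*} [AddCommGroup R]
    (c : (Fin (n + 1) → V) → R) : Prop :=
  ∀ (σ : Equiv.Perm (Fin (n + 1))) (f : Fin (n + 1) → V),
    c (f ∘ σ) = (Equiv.Perm.sign σ : ℤ) • c f

/-- The boundary operator: `∂` sends `[v₀,…,vₙ]` to `Σᵢ (−1)ⁱ [v₀,…,v̂ᵢ,…,vₙ]`;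
in the alternating-function encoding this is `(∂c) g = Σ_{v} c (v ∷ g)`. -/
def bdry {V : Type*} [Fintype V] {n : ℕ} {R : Type*} [AddCommMonoid R]
    (c : (Fin (n + 1) → V) → R) : (Fin n → V) → R :=
  fun g => ∑ v : V, c (Fin.cons v g)

/-- 1-norm of an integral chain: sum of the absolute values of the coefficients,
one per oriented simplex (each simplex has `(n+1)!` tuple representatives). -/
noncomputable def normZ {V : Type*} [Fintype V] [DecidableEq V] {n : ℕ}
    (c : (Fin (n + 1) → V) → ℤ) : ℝ :=
  (∑ f : Fin (n + 1) → V, |(c f : ℝ)|) / (Nat.factorial (n + 1) : ℝ)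

/-- 1-norm of a rational chain. -/
noncomputable def normQ {V : Type*} [Fintype V] [DecidableEq V] {n : ℕ}
    (c : (Fin (n + 1) → V) → ℚ) : ℝ :=
  (∑ f : Fin (n + 1) → V, |(c f : ℝ)|) / (Nat.factorial (n + 1) : ℝ)

/-- An admissible `d`-complex on `V`: an integral `d`-chain in which every oriented
`d`-simplex appears with coefficient `0` or `1` (i.e. every tuple has coefficient
`-1`, `0` or `1`), and whose boundary vanishes. Its *facets* are the oriented
simplices (tuples) with coefficient `1`. -/
structure IsAdmissible {V : Type*} [Fintype V] (d : ℕ)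
    (K : (Fin (d + 1) → V) → ℤ) : Prop where
  chain : IsAltChain d K
  coeff : ∀ f, K f = -1 ∨ K f = 0 ∨ K f = 1
  closed : ∀ g, bdry K g = 0

/-- `V_ℤ(K)`: the minimum 1-norm of an integral `(d+1)`-chain `α` with `∂α = K`
(the minimum is attained, so it equals this infimum). -/
noncomputable def VZ {V : Type*} [Fintype V] [DecidableEq V] (d : ℕ)
    (K : (Fin (d + 1) → V) → ℤ) : ℝ :=
  sInf { x : ℝ | ∃ α : (Fin (d + 2) → V) → ℤ,
    IsAltChain (d + 1) α ∧ (∀ g, bdry α g = K g) ∧ x = normZ α }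

/-- `V_ℚ(K)`: the minimum 1-norm of a rational `(d+1)`-chain `α` with `∂α = K`
(the minimum is attained, so it equals this infimum). -/
noncomputable def VQ {V : Type*} [Fintype V] [DecidableEq V] (d : ℕ)
    (K : (Fin (d + 1) → V) → ℤ) : ℝ :=
  sInf { x : ℝ | ∃ α : (Fin (d + 2) → V) → ℚ,
    IsAltChain (d + 1) α ∧ (∀ g, bdry α g = (K g : ℚ)) ∧ x = normQ α }

/-- The unit-flux constraint: for every oriented `(d+1)`-simplex `t` on `V`,
the total flux through its oriented boundary facets is at most `1`. -/
def UnitFlux {V : Type*} (d : ℕ) (φ : (Fin (d + 1) → V) → ℝ) : Prop :=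
  ∀ t : Fin (d + 2) → V, Function.Injective t →
    ∑ i : Fin (d + 2), (-1 : ℝ) ^ (i : ℕ) * φ (t ∘ i.succAbove) ≤ 1

/-- `φ(F₁) + ⋯ + φ(Fₙ)`, the sum of a flux function over the facets of `K`
(each facet has `(d+1)!` tuple representatives `f`, on which `K f * φ f` agree). -/
noncomputable def fluxSum {V : Type*} [Fintype V] (d : ℕ)
    (φ : (Fin (d + 1) → V) → ℝ) (K : (Fin (d + 1) → V) → ℤ) : ℝ :=
  (∑ f : Fin (d + 1) → V, (K f : ℝ) * φ f) / (Nat.factorial (d + 1) : ℝ)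

/-- Pushforward of a chain along a map of vertex sets `q : V → W`
(simplices whose image is degenerate die). -/
def pushChain {V W : Type*} [Fintype V] [DecidableEq W] (q : V → W) {n : ℕ}
    {R : Type*} [AddCommMonoid R] (c : (Fin n → V) → R) : (Fin n → W) → R :=
  fun f => ∑ g : Fin n → V, if q ∘ g = f then c g else 0

/-- The chain consisting of the single oriented simplex `[s 0, …, s n]`. -/
def simplexChain {V : Type*} [DecidableEq V] {n : ℕ} (s : Fin (n + 1) → V) :
    (Fin (n + 1) → V) → ℤ :=
  fun f => ∑ σ : Equiv.Perm (Fin (n + 1)),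
    if f = s ∘ σ then (Equiv.Perm.sign σ : ℤ) else 0

/-- The chain of the disjoint union `K ⊔ K'` on `V ⊕ V'`: it is `K + K'`. -/
def unionChain {V V' : Type*} [Fintype V] [Fintype V'] [DecidableEq V] [DecidableEq V']
    {n : ℕ} (K : (Fin n → V) → ℤ) (K' : (Fin n → V') → ℤ) : (Fin n → V ⊕ V') → ℤ :=
  fun f => pushChain Sum.inl K f + pushChain Sum.inr K' f

/-- The chain of the connected sum `K # K'` on the glued vertex set `W`
(with gluing maps `j : V → W`, `j' : V' → W` identifying the facet `vF` of `K`
with the facet `vF'` of `K'`): the image of `K + K' − F − F'` under the gluing. -/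
def connSum {V V' W : Type*} [Fintype V] [Fintype V'] [DecidableEq V] [DecidableEq V']
    [DecidableEq W] {d : ℕ} (K : (Fin (d + 1) → V) → ℤ) (K' : (Fin (d + 1) → V') → ℤ)
    (vF : Fin (d + 1) → V) (vF' : Fin (d + 1) → V') (j : V → W) (j' : V' → W) :
    (Fin (d + 1) → W) → ℤ :=
  pushChain (Sum.elim j j')
    (fun g : Fin (d + 1) → V ⊕ V' =>
      pushChain Sum.inl K g + pushChain Sum.inr K' g
        - pushChain Sum.inl (simplexChain vF) g - pushChain Sum.inr (simplexChain vF') g)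


namespace StmtAux

open Equiv Equiv.Perm Finset

variable {V : Type*} [Fintype V] [DecidableEq V]

omit [Fintype V] [DecidableEq V] in
lemma comp_right_cancel {n : ℕ} (σ : Equiv.Perm (Fin n)) (f g : Fin n → V) :
    f ∘ ⇑σ = g ∘ ⇑σ ↔ f = g := by
  constructor
  · intro h; funext x
    have := congrFun h (σ.symm x); simpa using this
  · rintro rfl; rfl

lemma sign_mul_int {n : ℕ} (a b : Equiv.Perm (Fin n)) :
    ((Equiv.Perm.sign (a * b) : ℤˣ) : ℤ) = ((Equiv.Perm.sign a : ℤˣ) : ℤ) * ((Equiv.Perm.sign b : ℤˣ) : ℤ) := by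
  rw [map_mul]; exact Units.val_mul _ _

/-- `simplexChain s` is alternating in its argument. -/
lemma simplexChain_alt {n : ℕ} (s : Fin (n + 1) → V) : IsAltChain n (simplexChain s) := by
  intro σ f
  unfold simplexChain
  rw [Finset.smul_sum]
  refine Fintype.sum_equiv (Equiv.mulRight σ⁻¹) _ _ fun τ => ?_
  have hre : (Equiv.mulRight σ⁻¹) τ = τ * σ⁻¹ := rfl
  rw [hre]
  have hiff : (f ∘ ⇑σ = s ∘ ⇑τ) ↔ f = s ∘ ⇑(τ * σ⁻¹) := by
    constructor
    · intro h; funext x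
      have := congrFun h (σ.symm x)
      simpa [Equiv.Perm.mul_apply] using this
    · intro h; funext x
      have := congrFun h (σ x)
      simpa [Equiv.Perm.mul_apply] using this
  rw [if_congr hiff rfl rfl]
  split
  · rw [sign_mul_int]
    simp only [map_inv, Int.units_inv_eq_self]
    rcases Int.units_eq_one_or (Equiv.Perm.sign σ) with h | h <;>
      rcases Int.units_eq_one_or (Equiv.Perm.sign τ) with h' | h' <;>
      simp [h, h']
  · simp

/-- `simplexChain` is alternating in the simplex. -/
lemma simplexChain_comp_perm {n : ℕ} (s : Fin (n + 1) → V) (τ₀ : Equiv.Perm (Fin (n + 1)))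
    (f : Fin (n + 1) → V) :
    simplexChain (s ∘ τ₀) f = (Equiv.Perm.sign τ₀ : ℤ) • simplexChain s f := by
  unfold simplexChain
  rw [Finset.smul_sum]
  refine Fintype.sum_equiv (Equiv.mulLeft τ₀) _ _ fun τ => ?_
  have hre : (Equiv.mulLeft τ₀) τ = τ₀ * τ := rfl
  rw [hre]
  have hiff : (f = (s ∘ ⇑τ₀) ∘ ⇑τ) ↔ f = s ∘ ⇑(τ₀ * τ) := by
    rw [show s ∘ ⇑(τ₀ * τ) = (s ∘ ⇑τ₀) ∘ ⇑τ from rfl]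
  rw [if_congr hiff rfl rfl]
  split
  · rw [sign_mul_int]
    rcases Int.units_eq_one_or (Equiv.Perm.sign τ₀) with h | h <;>
      rcases Int.units_eq_one_or (Equiv.Perm.sign τ) with h' | h' <;>
      simp [h, h']
  · simp

end StmtAux

namespace StmtAux

set_option linter.unusedSectionVars false

variable {V : Type*} [Fintype V] [DecidableEq V]

open Equiv Equiv.Perm Finset

/-- The map `(i, τ) ↦ σ` with `σ 0 = i`, `σ j.succ = i.succAbove (τ j)`. -/
def phi {n : ℕ} (p : Fin (n + 2) × Equiv.Perm (Fin (n + 1))) : Equiv.Perm (Fin (n + 2)) :=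
  (Equiv.Perm.decomposeFin.symm (0, p.2)).trans p.1.cycleRange.symm

lemma phi_zero {n : ℕ} (i : Fin (n + 2)) (τ : Equiv.Perm (Fin (n + 1))) :
    phi (i, τ) 0 = i := by
  simp [phi]

lemma phi_succ {n : ℕ} (i : Fin (n + 2)) (τ : Equiv.Perm (Fin (n + 1))) (j : Fin (n + 1)) :
    phi (i, τ) j.succ = i.succAbove (τ j) := by
  simp [phi]

lemma phi_sign {n : ℕ} (i : Fin (n + 2)) (τ : Equiv.Perm (Fin (n + 1))) :
    ((Equiv.Perm.sign (phi (i, τ)) : ℤˣ) : ℤ) = (-1 : ℤ) ^ (i : ℕ) * ((Equiv.Perm.sign τ : ℤˣ) : ℤ) := by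
  have h : phi (i, τ) = i.cycleRange⁻¹ * (Equiv.Perm.decomposeFin.symm (0, τ)) := rfl
  rw [h, sign_mul_int]
  rcases Int.units_eq_one_or (Equiv.Perm.sign τ) with h' | h' <;>
    simp [h', Fin.sign_cycleRange, Equiv.Perm.decomposeFin.symm_sign]

lemma phi_bijective {n : ℕ} : Function.Bijective (phi (n := n)) := by
  rw [Fintype.bijective_iff_injective_and_card]
  constructor
  · rintro ⟨i, τ⟩ ⟨i', τ'⟩ h
    have h0 : i = i' := by rw [← phi_zero i τ, ← phi_zero i' τ', h]
    subst h0
    have hτ : τ = τ' := by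
      ext j
      have := congrArg (fun σ : Equiv.Perm (Fin (n+2)) => σ j.succ) h
      simp only [phi_succ] at this
      exact congrArg Fin.val (Fin.succAbove_right_injective this)
    rw [hτ]
  · simp only [Fintype.card_prod, Fintype.card_perm, Fintype.card_fin, Nat.factorial_succ]

omit [DecidableEq V] in
lemma cons_eq_iff {n : ℕ} (v : V) (g : Fin n → V) (h : Fin (n + 1) → V) :
    Fin.cons v g = h ↔ v = h 0 ∧ g = h ∘ Fin.succ := by
  constructor
  · rintro rfl; exact ⟨rfl, rfl⟩
  · rintro ⟨rfl, rfl⟩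
    funext k
    refine Fin.cases ?_ (fun j => ?_) k <;> simp

/-- Boundary of a simplex chain. -/
lemma bdry_simplexChain {n : ℕ} (t : Fin (n + 2) → V) (g : Fin (n + 1) → V) :
    bdry (simplexChain t) g
      = ∑ i : Fin (n + 2), (-1 : ℤ) ^ (i : ℕ) * simplexChain (t ∘ i.succAbove) g := by
  unfold bdry simplexChain
  rw [Finset.sum_comm]
  have step1 : ∀ σ : Equiv.Perm (Fin (n + 2)),
      (∑ v : V, if Fin.cons v g = t ∘ ⇑σ then ((Equiv.Perm.sign σ : ℤˣ) : ℤ) else 0)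
        = if g = (t ∘ ⇑σ) ∘ Fin.succ then ((Equiv.Perm.sign σ : ℤˣ) : ℤ) else 0 := by
    intro σ
    have : ∀ v : V, (if Fin.cons v g = t ∘ ⇑σ then ((Equiv.Perm.sign σ : ℤˣ) : ℤ) else 0)
        = if v = (t ∘ ⇑σ) 0 then (if g = (t ∘ ⇑σ) ∘ Fin.succ then ((Equiv.Perm.sign σ : ℤˣ) : ℤ) else 0) else 0 := by
      intro v
      rw [if_congr (cons_eq_iff v g (t ∘ ⇑σ)) rfl rfl]
      by_cases h1 : v = (t ∘ ⇑σ) 0 <;> by_cases h2 : g = (t ∘ ⇑σ) ∘ Fin.succ <;>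
        simp [h1, h2]
    rw [Finset.sum_congr rfl fun v _ => this v, Finset.sum_ite_eq' Finset.univ ((t ∘ ⇑σ) 0)]
    simp
  rw [Finset.sum_congr rfl fun σ _ => step1 σ]
  rw [← Function.Bijective.sum_comp (phi_bijective (n := n))
    (fun σ => if g = (t ∘ ⇑σ) ∘ Fin.succ then ((Equiv.Perm.sign σ : ℤˣ) : ℤ) else 0)]
  rw [Fintype.sum_prod_type]
  refine Finset.sum_congr rfl fun i _ => ?_
  rw [Finset.mul_sum]
  refine Finset.sum_congr rfl fun τ _ => ?_
  have hcomp : (t ∘ ⇑(phi (i, τ))) ∘ Fin.succ = (t ∘ i.succAbove) ∘ ⇑τ := by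
    funext j; simp [phi_succ, Function.comp]
  rw [hcomp, phi_sign]
  split <;> simp

end StmtAux

namespace StmtAux

set_option linter.unusedSectionVars false

variable {V : Type*} [Fintype V] [DecidableEq V]

open Equiv Equiv.Perm Finset

set_option maxHeartbeats 1000000 in
/-- Expansion of an alternating rational chain in terms of simplex chains. -/
lemma sum_mul_simplexChain {n : ℕ} (b : (Fin (n + 1) → V) → ℚ) (hb : IsAltChain n b)
    (g : Fin (n + 1) → V) :
    ∑ f : Fin (n + 1) → V, b f * ((simplexChain f g : ℤ) : ℚ)
      = ((Nat.factorial (n + 1) : ℚ)) * b g := by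
  unfold simplexChain
  have step : ∀ f : Fin (n + 1) → V, b f * ((∑ σ : Equiv.Perm (Fin (n + 1)),
      if g = f ∘ ⇑σ then ((Equiv.Perm.sign σ : ℤˣ) : ℤ) else 0 : ℤ) : ℚ)
      = ∑ σ : Equiv.Perm (Fin (n + 1)),
          if f = g ∘ ⇑σ.symm then b f * ((Equiv.Perm.sign σ : ℤˣ) : ℤ) else 0 := by
    intro f
    push_cast
    rw [Finset.mul_sum]
    refine Finset.sum_congr rfl fun σ _ => ?_
    have hiff : (g = f ∘ ⇑σ) ↔ f = g ∘ ⇑σ.symm := by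
      constructor
      · rintro rfl; funext x; simp
      · rintro rfl; funext x; simp
    rw [if_congr hiff rfl rfl]
    split <;> simp
  rw [Finset.sum_congr rfl fun f _ => step f, Finset.sum_comm]
  have inner : ∀ σ : Equiv.Perm (Fin (n + 1)),
      (∑ f : Fin (n + 1) → V, if f = g ∘ ⇑σ.symm then b f * ((Equiv.Perm.sign σ : ℤˣ) : ℤ) else 0)
        = b g := by
    intro σ
    rw [Finset.sum_ite_eq' Finset.univ (g ∘ ⇑σ.symm) (fun f => b f * ((Equiv.Perm.sign σ : ℤˣ) : ℤ))]
    simp only [Finset.mem_univ, if_true]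
    have halt := hb σ.symm g
    rw [halt, show σ.symm = σ⁻¹ from rfl]
    rcases Int.units_eq_one_or (Equiv.Perm.sign σ) with h | h <;>
      simp [h]
  rw [Finset.sum_congr rfl fun σ _ => inner σ]
  simp [Finset.card_univ, Fintype.card_perm]

/-- Casting an alternating integer chain to `ℚ` keeps it alternating. -/
lemma isAltChain_cast {n : ℕ} (c : (Fin (n + 1) → V) → ℤ) (hc : IsAltChain n c) :
    IsAltChain n (fun f => ((c f : ℤ) : ℚ)) := by
  intro σ f
  show ((c (f ∘ ⇑σ) : ℤ) : ℚ) = _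
  rw [hc σ f]
  push_cast
  rcases Int.units_eq_one_or (Equiv.Perm.sign σ) with h | h <;> simp [h]

set_option maxHeartbeats 2000000 in
/-- Existence of a rational alternating filling of a closed chain. -/
lemma exists_filling (d : ℕ) (K : (Fin (d + 1) → V) → ℤ) (hK : IsAltChain d K)
    (hcl : ∀ g, bdry K g = 0) :
    ∃ α : (Fin (d + 2) → V) → ℚ, IsAltChain (d + 1) α ∧ ∀ g, bdry α g = (K g : ℚ) := by
  rcases isEmpty_or_nonempty V with hV | hV
  · refine ⟨0, ?_, ?_⟩
    · intro σ f; simp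
    · intro g; exact (hV.false (g 0)).elim
  · obtain ⟨v₀⟩ := hV
    set c : ℚ := ((Nat.factorial (d + 1) : ℚ))⁻¹ with hc
    refine ⟨fun h => c * ∑ f : Fin (d + 1) → V, (K f : ℚ) * ((simplexChain (Fin.cons v₀ f) h : ℤ) : ℚ),
      ?_, ?_⟩
    · intro σ h
      have hA : ∀ f : Fin (d + 1) → V,
          ((simplexChain (Fin.cons v₀ f) (h ∘ ⇑σ) : ℤ) : ℚ)
            = (((Equiv.Perm.sign σ : ℤˣ) : ℤ) : ℚ) * ((simplexChain (Fin.cons v₀ f) h : ℤ) : ℚ) := by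
        intro f
        rw [simplexChain_alt (Fin.cons v₀ f) σ h, zsmul_eq_mul]
        push_cast
        ring
      show c * ∑ f : Fin (d + 1) → V, (K f : ℚ) * ((simplexChain (Fin.cons v₀ f) (h ∘ ⇑σ) : ℤ) : ℚ)
          = ((Equiv.Perm.sign σ : ℤˣ) : ℤ) • (c * ∑ f : Fin (d + 1) → V,
              (K f : ℚ) * ((simplexChain (Fin.cons v₀ f) h : ℤ) : ℚ))
      simp only [hA]
      rw [zsmul_eq_mul]
      simp only [Finset.mul_sum]
      refine Finset.sum_congr rfl fun f _ => ?_
      ring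
    · intro g
      show (∑ v : V, c * ∑ f : Fin (d + 1) → V,
          (K f : ℚ) * ((simplexChain (Fin.cons v₀ f) (Fin.cons v g) : ℤ) : ℚ)) = (K g : ℚ)
      have swap1 : (∑ v : V, c * ∑ f : Fin (d + 1) → V, (K f : ℚ) *
            ((simplexChain (Fin.cons v₀ f) (Fin.cons v g) : ℤ) : ℚ))
          = c * ∑ f : Fin (d + 1) → V, (K f : ℚ) *
            ((∑ v : V, simplexChain (Fin.cons v₀ f) (Fin.cons v g) : ℤ) : ℚ) := by
        rw [← Finset.mul_sum, Finset.sum_comm]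
        congr 1
        refine Finset.sum_congr rfl fun f _ => ?_
        rw [← Finset.mul_sum]
        congr 1
        push_cast
        rfl
      rw [swap1]
      have expand : ∀ f : Fin (d + 1) → V,
          ((∑ v : V, simplexChain (Fin.cons v₀ f) (Fin.cons v g) : ℤ) : ℚ)
            = ((simplexChain f g : ℤ) : ℚ)
              + ∑ j : Fin (d + 1), (-1 : ℚ) ^ ((j : ℕ) + 1) *
                  ((simplexChain (Fin.cons v₀ (f ∘ j.succAbove)) g : ℤ) : ℚ) := by
        intro f
        have hb : (∑ v : V, simplexChain (Fin.cons v₀ f) (Fin.cons v g) : ℤ)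
            = bdry (simplexChain (Fin.cons v₀ f)) g := rfl
        rw [hb, bdry_simplexChain (Fin.cons v₀ f) g]
        push_cast
        rw [Fin.sum_univ_succ]
        congr 1
        · have h0 : (Fin.cons v₀ f : Fin (d + 2) → V) ∘ (Fin.succAbove (0 : Fin (d + 2))) = f := by
            funext j; simp
          rw [h0]; simp
        · refine Finset.sum_congr rfl fun j _ => ?_
          have hsa : (Fin.cons v₀ f : Fin (d + 2) → V) ∘ (Fin.succAbove j.succ)
              = Fin.cons v₀ (f ∘ j.succAbove) := by
            funext k
            refine Fin.cases ?_ (fun m => ?_) k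
            · simp
            · simp [Fin.succ_succAbove_succ]
          rw [hsa, Fin.val_succ, pow_succ]
          try ring
      rw [Finset.sum_congr rfl fun f _ => by rw [expand f]]
      rw [Finset.sum_congr rfl fun (f : Fin (d+1) → V) _ => mul_add ((K f : ℚ)) _ _]
      rw [Finset.sum_add_distrib]
      have main1 : ∑ f : Fin (d + 1) → V, (K f : ℚ) * ((simplexChain f g : ℤ) : ℚ)
          = ((Nat.factorial (d + 1) : ℚ)) * (K g : ℚ) :=
        sum_mul_simplexChain (fun f => ((K f : ℤ) : ℚ)) (isAltChain_cast K hK) g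
      have main2 : ∑ f : Fin (d + 1) → V, (K f : ℚ) *
          (∑ j : Fin (d + 1), (-1 : ℚ) ^ ((j : ℕ) + 1) *
            ((simplexChain (Fin.cons v₀ (f ∘ j.succAbove)) g : ℤ) : ℚ)) = 0 := by
        have hswap : ∑ f : Fin (d + 1) → V, (K f : ℚ) *
            (∑ j : Fin (d + 1), (-1 : ℚ) ^ ((j : ℕ) + 1) *
              ((simplexChain (Fin.cons v₀ (f ∘ j.succAbove)) g : ℤ) : ℚ))
            = ∑ j : Fin (d + 1), (-1 : ℚ) ^ ((j : ℕ) + 1) *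
                ∑ f : Fin (d + 1) → V, (K f : ℚ) *
                  ((simplexChain (Fin.cons v₀ (f ∘ j.succAbove)) g : ℤ) : ℚ) := by
          simp only [Finset.mul_sum]
          rw [Finset.sum_comm]
          refine Finset.sum_congr rfl fun j _ => Finset.sum_congr rfl fun f _ => by ring
        rw [hswap]
        refine Finset.sum_eq_zero fun j _ => ?_
        have hzero : ∑ f : Fin (d + 1) → V, (K f : ℚ) *
            ((simplexChain (Fin.cons v₀ (f ∘ j.succAbove)) g : ℤ) : ℚ) = 0 := by
          rw [← Equiv.sum_comp (Fin.insertNthEquiv (fun _ : Fin (d + 1) => V) j)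
            (fun f => (K f : ℚ) * ((simplexChain (Fin.cons v₀ (f ∘ j.succAbove)) g : ℤ) : ℚ))]
          rw [Fintype.sum_prod_type, Finset.sum_comm]
          refine Finset.sum_eq_zero fun h _ => ?_
          have he : ∀ w : V, (Fin.insertNthEquiv (fun _ : Fin (d + 1) => V) j) (w, h)
              = Fin.insertNth j w h := fun w => rfl
          have hres : ∀ w : V, (Fin.insertNth j w h) ∘ j.succAbove = h := by
            intro w; funext m; simp
          have hcyc : ∀ w : V, Fin.insertNth j w h = Fin.cons w h ∘ ⇑(j.cycleRange) := by
            intro w; funext k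
            refine Fin.succAboveCases j ?_ ?_ k
            · simp
            · intro m
              simp [Fin.insertNth_apply_succAbove, Fin.cycleRange_succAbove]
          have hKval : ∀ w : V, (K (Fin.insertNth j w h) : ℚ)
              = (((Equiv.Perm.sign (j.cycleRange) : ℤˣ) : ℤ) : ℚ) * (K (Fin.cons w h) : ℚ) := by
            intro w
            rw [hcyc w, hK (j.cycleRange) (Fin.cons w h), zsmul_eq_mul]
            push_cast
            ring
          calc ∑ w : V, (K ((Fin.insertNthEquiv (fun _ : Fin (d + 1) => V) j) (w, h)) : ℚ) *
                ((simplexChain (Fin.cons v₀ (((Fin.insertNthEquiv (fun _ : Fin (d + 1) => V) j) (w, h)) ∘ j.succAbove)) g : ℤ) : ℚ)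
              = ∑ w : V, (((Equiv.Perm.sign (j.cycleRange) : ℤˣ) : ℤ) : ℚ) * (K (Fin.cons w h) : ℚ) *
                ((simplexChain (Fin.cons v₀ h) g : ℤ) : ℚ) := by
                refine Finset.sum_congr rfl fun w _ => ?_
                rw [he w, hres w, hKval w]
            _ = (((Equiv.Perm.sign (j.cycleRange) : ℤˣ) : ℤ) : ℚ) *
                ((∑ w : V, K (Fin.cons w h) : ℤ) : ℚ) *
                ((simplexChain (Fin.cons v₀ h) g : ℤ) : ℚ) := by
                rw [← Finset.sum_mul, ← Finset.mul_sum]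
                push_cast
                ring
            _ = 0 := by
                have : (∑ w : V, K (Fin.cons w h) : ℤ) = bdry K h := rfl
                rw [this, hcl h]
                simp
        rw [hzero, mul_zero]
      rw [main1, main2, add_zero, hc]
      rw [← mul_assoc, inv_mul_cancel₀ (by positivity), one_mul]

end StmtAux

namespace StmtAux

set_option linter.unusedSectionVars false
set_option maxHeartbeats 1000000

variable {V : Type*} [Fintype V] [DecidableEq V]

open Equiv Equiv.Perm Finset

lemma normQ_nonneg {n : ℕ} (c : (Fin (n + 1) → V) → ℚ) : 0 ≤ normQ c := by
  unfold normQ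
  positivity

lemma normQ_add_le {n : ℕ} (a b : (Fin (n + 1) → V) → ℚ) :
    normQ (a + b) ≤ normQ a + normQ b := by
  unfold normQ
  rw [← add_div]
  refine div_le_div_of_nonneg_right ?_ (by positivity)
  rw [← Finset.sum_add_distrib]
  refine Finset.sum_le_sum fun f _ => ?_
  rw [show (a + b) f = a f + b f from rfl]
  push_cast
  apply abs_add_le

lemma normQ_smul {n : ℕ} (q : ℚ) (hq : 0 ≤ q) (a : (Fin (n + 1) → V) → ℚ) :
    normQ (q • a) = (q : ℝ) * normQ a := by
  unfold normQ
  rw [← mul_div_assoc, Finset.mul_sum]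
  congr 1
  refine Finset.sum_congr rfl fun f _ => ?_
  have : ((q • a) f : ℝ) = (q : ℝ) * (a f : ℝ) := by
    rw [show (q • a) f = q * a f from rfl]
    push_cast
    ring
  rw [this, abs_mul, abs_of_nonneg (by exact_mod_cast hq)]

/-- The norm of a simplex chain on an injective tuple is `1`. -/
lemma normQ_simplexChain {n : ℕ} (t : Fin (n + 2) → V) (ht : Function.Injective t) :
    normQ (fun g : Fin (n + 2) → V => ((simplexChain t g : ℤ) : ℚ)) = 1 := by
  unfold normQ
  have key : ∑ g : Fin (n + 2) → V, |(((simplexChain t g : ℤ) : ℚ) : ℝ)|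
      = (Nat.factorial (n + 2) : ℝ) := by
    have himg : ∀ g : Fin (n + 2) → V,
        g ∉ Finset.univ.image (fun σ : Equiv.Perm (Fin (n + 2)) => t ∘ ⇑σ) →
        |(((simplexChain t g : ℤ) : ℚ) : ℝ)| = 0 := by
      intro g hg
      have : simplexChain t g = 0 := by
        unfold simplexChain
        refine Finset.sum_eq_zero fun σ _ => ?_
        rw [if_neg]
        intro h
        exact hg (Finset.mem_image.mpr ⟨σ, Finset.mem_univ σ, h.symm⟩)
      rw [this]; simp
    have hinj : ∀ σ ∈ (Finset.univ : Finset (Equiv.Perm (Fin (n + 2)))),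
        ∀ σ' ∈ (Finset.univ : Finset (Equiv.Perm (Fin (n + 2)))),
        t ∘ ⇑σ = t ∘ ⇑σ' → σ = σ' := by
      intro σ _ σ' _ h
      ext x
      have := congrFun h x
      exact congrArg Fin.val (ht this)
    rw [← Finset.sum_subset (Finset.subset_univ
      (Finset.univ.image (fun σ : Equiv.Perm (Fin (n + 2)) => t ∘ ⇑σ)))
      (fun g _ hg => himg g hg)]
    rw [Finset.sum_image hinj]
    have hval : ∀ σ : Equiv.Perm (Fin (n + 2)),
        simplexChain t (t ∘ ⇑σ) = ((Equiv.Perm.sign σ : ℤˣ) : ℤ) := by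
      intro σ
      unfold simplexChain
      rw [Finset.sum_eq_single σ]
      · rw [if_pos rfl]
      · intro σ' _ hne
        rw [if_neg]
        intro h
        exact hne (hinj σ (Finset.mem_univ _) σ' (Finset.mem_univ _) h).symm
      · intro h; exact absurd (Finset.mem_univ σ) h
    have : ∀ σ : Equiv.Perm (Fin (n + 2)),
        |(((simplexChain t (t ∘ ⇑σ) : ℤ) : ℚ) : ℝ)| = 1 := by
      intro σ
      rw [hval σ]
      rcases Int.units_eq_one_or (Equiv.Perm.sign σ) with h | h <;> simp [h]
    rw [Finset.sum_congr rfl fun σ _ => this σ]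
    simp [Finset.card_univ, Fintype.card_perm]
  rw [key, div_self]
  positivity

end StmtAux

namespace StmtAux

set_option maxHeartbeats 1000000

open Submodule

variable {E : Type*} [AddCommGroup E] [Module ℚ E]

/-- One-step extension for Hahn–Banach over `ℚ` with real values. -/
lemma hb_step (p : E → ℝ) (hadd : ∀ x y, p (x + y) ≤ p x + p y)
    (hsmul : ∀ (q : ℚ), 0 ≤ q → ∀ x, p (q • x) = (q : ℝ) * p x)
    (f : E →ₗ.[ℚ] ℝ) (hf : ∀ x : f.domain, f x ≤ p x.val) (y : E) :
    ∃ g : E →ₗ.[ℚ] ℝ, y ∈ g.domain ∧ (∀ x : g.domain, g x ≤ p x.val) ∧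
      (∀ x : f.domain, ∃ hx : (x : E) ∈ g.domain, g ⟨x.val, hx⟩ = f x) := by
  by_cases hy : y ∈ f.domain
  · exact ⟨f, hy, hf, fun x => ⟨x.2, rfl⟩⟩
  -- cross inequality
  have cross : ∀ m m' : f.domain, f m + f m' ≤ p (m.val - y) + p (m'.val + y) := by
    intro m m'
    have h1 : f m + f m' = f (m + m') := (f.map_add m m').symm
    have h2 : f (m + m') ≤ p ((m + m').val) := hf (m + m')
    have h3 : ((m + m' : f.domain) : E) = (m.val - y) + (m'.val + y) := by
      rw [Submodule.coe_add]
      abel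
    calc f m + f m' = f (m + m') := h1
      _ ≤ p ((m + m').val) := h2
      _ = p ((m.val - y) + (m'.val + y)) := by rw [h3]
      _ ≤ p (m.val - y) + p (m'.val + y) := hadd _ _
  set A : Set ℝ := Set.range (fun m : f.domain => f m - p (m.val - y)) with hA
  have hA_ne : A.Nonempty := ⟨f 0 - p ((0 : f.domain).val - y), 0, rfl⟩
  have hA_bdd : BddAbove A := by
    refine ⟨p ((0 : f.domain).val + y) - f 0, ?_⟩
    rintro x ⟨m, rfl⟩
    dsimp only
    have := cross m 0
    linarith
  set c : ℝ := sSup A with hc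
  have key1 : ∀ m : f.domain, f m - p (m.val - y) ≤ c :=
    fun m => le_csSup hA_bdd ⟨m, rfl⟩
  have key2 : ∀ m : f.domain, c ≤ p (m.val + y) - f m := by
    intro m
    refine csSup_le hA_ne ?_
    rintro x ⟨m', rfl⟩
    dsimp only
    have := cross m' m
    linarith
  refine ⟨f.supSpanSingleton y c hy, ?_, ?_, ?_⟩
  · rw [LinearPMap.domain_supSpanSingleton]
    exact Submodule.mem_sup_right (Submodule.mem_span_singleton_self y)
  · rintro ⟨z, hz⟩
    rw [LinearPMap.domain_supSpanSingleton] at hz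
    obtain ⟨m, hm, w, hw, rfl⟩ := Submodule.mem_sup.mp hz
    obtain ⟨q, rfl⟩ := Submodule.mem_span_singleton.mp hw
    have happ : f.supSpanSingleton y c hy ⟨m + q • y, hz⟩ = f ⟨m, hm⟩ + q • c :=
      LinearPMap.supSpanSingleton_apply_mk f y c hy m hm q
    rw [happ]
    rcases lt_trichotomy q 0 with hq | hq | hq
    · -- q < 0, use key1 at (-q)⁻¹ • m
      set r : ℚ := -q with hr
      have hrpos : 0 < r := by rw [hr]; exact neg_pos.mpr hq
      have hm' : r⁻¹ • m ∈ f.domain := f.domain.smul_mem _ hm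
      have h1 := key1 ⟨r⁻¹ • m, hm'⟩
      have hval : f ⟨r⁻¹ • m, hm'⟩ = ((r : ℝ))⁻¹ * f ⟨m, hm⟩ := by
        have heq : (⟨r⁻¹ • m, hm'⟩ : f.domain) = r⁻¹ • ⟨m, hm⟩ := rfl
        rw [heq, f.map_smul, Rat.smul_def]
        push_cast
        ring
      have harg : (⟨r⁻¹ • m, hm'⟩ : f.domain).val - y = r⁻¹ • (m + q • y) := by
        show r⁻¹ • m - y = r⁻¹ • (m + q • y)
        rw [smul_add, smul_smul]
        rw [show r⁻¹ * q = -1 by rw [hr, inv_neg, neg_mul, inv_mul_cancel₀ (ne_of_lt hq)]]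
        rw [neg_one_smul]
        abel
      have hp : p ((⟨r⁻¹ • m, hm'⟩ : f.domain).val - y) = ((r : ℝ))⁻¹ * p (m + q • y) := by
        rw [harg, hsmul r⁻¹ (by positivity)]
        push_cast
        ring
      rw [hval, hp] at h1
      have hrR : (0 : ℝ) < (r : ℝ) := by exact_mod_cast hrpos
      have hrne : ((r : ℝ)) ≠ 0 := ne_of_gt hrR
      have hmul := mul_le_mul_of_nonneg_left h1 (le_of_lt hrR)
      rw [mul_sub, ← mul_assoc, ← mul_assoc, mul_inv_cancel₀ hrne, one_mul, one_mul] at hmul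
      rw [Rat.smul_def]
      have hqr : (q : ℝ) = -(r : ℝ) := by rw [hr]; push_cast; ring
      rw [hqr]
      show f ⟨m, hm⟩ + -(r : ℝ) * c ≤ p (m + q • y)
      linarith
    · subst hq
      simp only [zero_smul, add_zero]
      exact hf ⟨m, hm⟩
    · -- q > 0, use key2 at q⁻¹ • m
      have hm' : q⁻¹ • m ∈ f.domain := f.domain.smul_mem _ hm
      have h2 := key2 ⟨q⁻¹ • m, hm'⟩
      have hval : f ⟨q⁻¹ • m, hm'⟩ = ((q : ℝ))⁻¹ * f ⟨m, hm⟩ := by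
        have heq : (⟨q⁻¹ • m, hm'⟩ : f.domain) = q⁻¹ • ⟨m, hm⟩ := rfl
        rw [heq, f.map_smul, Rat.smul_def]
        push_cast
        ring
      have harg : (⟨q⁻¹ • m, hm'⟩ : f.domain).val + y = q⁻¹ • (m + q • y) := by
        show q⁻¹ • m + y = q⁻¹ • (m + q • y)
        rw [smul_add, smul_smul]
        rw [inv_mul_cancel₀ (ne_of_gt hq), one_smul]
      have hp : p ((⟨q⁻¹ • m, hm'⟩ : f.domain).val + y) = ((q : ℝ))⁻¹ * p (m + q • y) := by
        rw [harg, hsmul q⁻¹ (by positivity)]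
        push_cast
        ring
      rw [hval, hp] at h2
      have hqR : (0 : ℝ) < (q : ℝ) := by exact_mod_cast hq
      have hqne : ((q : ℝ)) ≠ 0 := ne_of_gt hqR
      have hmul := mul_le_mul_of_nonneg_left h2 (le_of_lt hqR)
      rw [mul_sub, ← mul_assoc, ← mul_assoc, mul_inv_cancel₀ hqne, one_mul, one_mul] at hmul
      rw [Rat.smul_def]
      show f ⟨m, hm⟩ + (q : ℝ) * c ≤ p (m + q • y)
      linarith
  · intro x
    have hx' : (x : E) ∈ (f.supSpanSingleton y c hy).domain := by
      rw [LinearPMap.domain_supSpanSingleton]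
      exact Submodule.mem_sup_left x.2
    refine ⟨hx', ?_⟩
    have : f.supSpanSingleton y c hy ⟨x.val + (0 : ℚ) • y, by simpa using hx'⟩
        = f ⟨x.val, x.2⟩ + (0 : ℚ) • c :=
      LinearPMap.supSpanSingleton_apply_mk f y c hy x.val x.2 0
    have harg : (⟨x.val + (0 : ℚ) • y, by simpa using hx'⟩ : (f.supSpanSingleton y c hy).domain)
        = ⟨x.val, hx'⟩ := by
      apply Subtype.ext
      simp
    rw [harg] at this
    rw [this]
    simp

end StmtAux

namespace StmtAux

set_option maxHeartbeats 1000000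

open Submodule

variable {E : Type*} [AddCommGroup E] [Module ℚ E]

/-- Hahn–Banach for finite-dimensional `ℚ`-vector spaces with real-valued sublinear bound. -/
theorem hahn_banach_rat [FiniteDimensional ℚ E] (p : E → ℝ)
    (hadd : ∀ x y, p (x + y) ≤ p x + p y)
    (hsmul : ∀ (q : ℚ), 0 ≤ q → ∀ x, p (q • x) = (q : ℝ) * p x) (x₀ : E) :
    ∃ ψ : E →ₗ[ℚ] ℝ, (∀ x, ψ x ≤ p x) ∧ ψ x₀ = p x₀ := by
  have p0 : p 0 = 0 := by
    have := hsmul 0 le_rfl 0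
    simpa using this
  -- base partial map
  have base : ∃ f₀ : E →ₗ.[ℚ] ℝ, (∃ hx : x₀ ∈ f₀.domain, f₀ ⟨x₀, hx⟩ = p x₀) ∧
      (∀ x : f₀.domain, f₀ x ≤ p x.val) := by
    by_cases hx0 : x₀ = 0
    · refine ⟨⟨⊥, 0⟩, ⟨?_, ?_⟩, ?_⟩
      · rw [hx0]; exact Submodule.zero_mem ⊥
      · subst hx0; rw [p0]; rfl
      · rintro ⟨x, hx⟩
        have : x = 0 := by simpa using hx
        subst this
        rw [p0]
        exact le_of_eq rfl
    · refine ⟨LinearPMap.mkSpanSingleton x₀ (p x₀) hx0, ⟨Submodule.mem_span_singleton_self x₀, ?_⟩, ?_⟩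
      · exact LinearPMap.mkSpanSingleton_apply ℚ ℚ hx0 (p x₀)
      · rintro ⟨x, hx⟩
        obtain ⟨q, rfl⟩ := Submodule.mem_span_singleton.mp hx
        have happ : LinearPMap.mkSpanSingleton x₀ (p x₀) hx0 ⟨q • x₀, hx⟩ = q • p x₀ := by
          exact LinearPMap.mkSpanSingleton'_apply x₀ (p x₀) _ q hx
        rw [happ, Rat.smul_def]
        rcases le_or_gt 0 q with hq | hq
        · rw [hsmul q hq x₀]
        · have h1 : 0 = p (q • x₀ + (-q) • x₀) := by
            rw [← add_smul]
            simp [p0]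
          have h2 : p (q • x₀ + (-q) • x₀) ≤ p (q • x₀) + p ((-q) • x₀) := hadd _ _
          have h3 : p ((-q) • x₀) = ((-q : ℚ) : ℝ) * p x₀ := hsmul (-q) (by linarith) x₀
          have : -(((-q : ℚ) : ℝ) * p x₀) ≤ p (q • x₀) := by linarith
          calc (q : ℝ) * p x₀ = -(((-q : ℚ) : ℝ) * p x₀) := by push_cast; ring
            _ ≤ p (q • x₀) := this
  obtain ⟨f₀, hf₀x, hf₀le⟩ := base
  obtain ⟨n, s, hs⟩ := Module.Finite.exists_fin (R := ℚ) (M := E)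
  have main : ∀ k : ℕ, ∃ g : E →ₗ.[ℚ] ℝ,
      (∀ i : Fin n, (i : ℕ) < k → s i ∈ g.domain) ∧
      (∃ hx : x₀ ∈ g.domain, g ⟨x₀, hx⟩ = p x₀) ∧
      (∀ x : g.domain, g x ≤ p x.val) := by
    intro k
    induction k with
    | zero => exact ⟨f₀, fun i hi => absurd hi (by omega), hf₀x, hf₀le⟩
    | succ k ih =>
      obtain ⟨g, hg1, hg2, hg3⟩ := ih
      by_cases hk : k < n
      · obtain ⟨g', hy, hdom, hext⟩ := hb_step p hadd hsmul g hg3 (s ⟨k, hk⟩)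
        refine ⟨g', ?_, ?_, hdom⟩
        · intro i hi
          rcases Nat.lt_or_ge (i : ℕ) k with h | h
          · obtain ⟨hmem, _⟩ := hext ⟨s i, hg1 i h⟩
            exact hmem
          · have : (i : ℕ) = k := by omega
            have : i = ⟨k, hk⟩ := Fin.ext this
            rw [this]
            exact hy
        · obtain ⟨hx, hval⟩ := hg2
          obtain ⟨hx', hval'⟩ := hext ⟨x₀, hx⟩
          exact ⟨hx', hval'.trans hval⟩
      · exact ⟨g, fun i hi => hg1 i (by omega), hg2, hg3⟩
  obtain ⟨g, hg1, ⟨hx, hval⟩, hg3⟩ := main n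
  have hdom : g.domain = ⊤ := by
    rw [eq_top_iff, ← hs, Submodule.span_le]
    rintro _ ⟨i, rfl⟩
    exact hg1 i i.isLt
  have hmem : ∀ x : E, x ∈ g.domain := fun x => hdom.symm ▸ Submodule.mem_top
  refine ⟨{ toFun := fun x => g ⟨x, hmem x⟩,
            map_add' := fun a b => ?_,
            map_smul' := fun q a => ?_ }, fun x => hg3 ⟨x, hmem x⟩, hval⟩
  · show g ⟨a + b, hmem _⟩ = g ⟨a, hmem a⟩ + g ⟨b, hmem b⟩
    rw [show (⟨a + b, hmem _⟩ : g.domain) = ⟨a, hmem a⟩ + ⟨b, hmem b⟩ from rfl]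
    exact g.map_add _ _
  · show g ⟨q • a, hmem _⟩ = (RingHom.id ℚ) q • g ⟨a, hmem a⟩
    rw [show (⟨q • a, hmem _⟩ : g.domain) = q • ⟨a, hmem a⟩ from rfl]
    exact g.map_smul q _

end StmtAux

namespace StmtAux

set_option linter.unusedSectionVars false
set_option maxHeartbeats 2000000

variable {V : Type*} [Fintype V] [DecidableEq V]

open Equiv Equiv.Perm Finset

/-- Alternating chains form a submodule. -/
def altSub (n : ℕ) : Submodule ℚ ((Fin (n + 1) → V) → ℚ) where
  carrier := {c | IsAltChain n c}
  add_mem' := by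
    intro a b ha hb σ f
    show a (f ∘ ⇑σ) + b (f ∘ ⇑σ) = (Equiv.Perm.sign σ : ℤ) • (a f + b f)
    rw [ha σ f, hb σ f, smul_add]
  zero_mem' := by
    intro σ f
    simp
  smul_mem' := by
    intro q c hc σ f
    show q • (c (f ∘ ⇑σ)) = (Equiv.Perm.sign σ : ℤ) • (q • c f)
    rw [hc σ f, smul_comm]

lemma mem_altSub {n : ℕ} {c : (Fin (n + 1) → V) → ℚ} :
    c ∈ altSub (V := V) n ↔ IsAltChain n c := Iff.rfl

/-- The boundary operator as a linear map. -/
def bdryL (n : ℕ) : ((Fin (n + 1) → V) → ℚ) →ₗ[ℚ] ((Fin n → V) → ℚ) where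
  toFun := bdry
  map_add' a b := by
    funext g
    show (∑ v : V, (a (Fin.cons v g) + b (Fin.cons v g))) = bdry a g + bdry b g
    rw [Finset.sum_add_distrib]
    rfl
  map_smul' q a := by
    funext g
    show (∑ v : V, q • a (Fin.cons v g)) = (q • bdry a g : ℚ)
    rw [← Finset.smul_sum]
    rfl

end StmtAux

open StmtAux Pointwise in
set_option maxHeartbeats 4000000 in
/-- Optimal flux function: there is a flux function satisfying the unit-flux
constraint whose total flux through the facets of `K` equals `V_ℚ(K)`. -/
theorem stmt2 {V : Type*} [Fintype V] [DecidableEq V] (d : ℕ)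
    (K : (Fin (d + 1) → V) → ℤ) (hK : IsAdmissible d K) :
    ∃ φ : (Fin (d + 1) → V) → ℝ,
      IsAltChain d φ ∧ UnitFlux d φ ∧ fluxSum d φ K = VQ d K := by
  classical
  set Kq : (Fin (d + 1) → V) → ℚ := fun f => ((K f : ℤ) : ℚ) with hKqdef
  have hKqalt : IsAltChain d Kq := isAltChain_cast K hK.chain
  obtain ⟨α₀, hα₀alt, hα₀b⟩ := exists_filling d K hK.chain hK.closed
  set E := Submodule.map (bdryL (V := V) (d + 1)) (altSub (V := V) (d + 1)) with hEdef
  have hKE : Kq ∈ E := ⟨α₀, hα₀alt, funext hα₀b⟩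
  set Fill : ((Fin (d + 1) → V) → ℚ) → Set ℝ := fun b =>
    {x | ∃ α : (Fin (d + 2) → V) → ℚ,
      IsAltChain (d + 1) α ∧ (∀ g, bdry α g = b g) ∧ x = normQ α} with hFilldef
  have Fill_nonempty : ∀ b ∈ E, (Fill b).Nonempty := by
    rintro b ⟨α, hα, rfl⟩
    exact ⟨normQ α, α, hα, fun g => rfl, rfl⟩
  have Fill_lb : ∀ (b) (x), x ∈ Fill b → (0 : ℝ) ≤ x := by
    rintro b x ⟨α, _, _, rfl⟩
    exact normQ_nonneg α
  have Fill_bdd : ∀ b, BddBelow (Fill b) := fun b => ⟨0, fun x hx => Fill_lb b x hx⟩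
  set p : ↥E → ℝ := fun b => sInf (Fill b.val) with hpdef
  have bdry_add : ∀ (α β : (Fin (d + 2) → V) → ℚ) (g : Fin (d + 1) → V),
      bdry (α + β) g = bdry α g + bdry β g := by
    intro α β g
    show (∑ v : V, (α (Fin.cons v g) + β (Fin.cons v g))) = _
    rw [Finset.sum_add_distrib]
    rfl
  have bdry_smul : ∀ (q : ℚ) (α : (Fin (d + 2) → V) → ℚ) (g : Fin (d + 1) → V),
      bdry (q • α) g = q * bdry α g := by
    intro q α g
    show (∑ v : V, q • α (Fin.cons v g)) = _
    rw [← Finset.smul_sum]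
    rfl
  have hadd : ∀ a b : ↥E, p (a + b) ≤ p a + p b := by
    intro a b
    refine le_of_forall_pos_le_add ?_
    intro ε hε
    obtain ⟨x, hxmem, hxlt⟩ := Real.lt_sInf_add_pos (Fill_nonempty a.val a.2) (half_pos hε)
    obtain ⟨y, hymem, hylt⟩ := Real.lt_sInf_add_pos (Fill_nonempty b.val b.2) (half_pos hε)
    obtain ⟨α, hαalt, hαb, rfl⟩ := hxmem
    obtain ⟨β, hβalt, hβb, rfl⟩ := hymem
    have hmem : normQ (α + β) ∈ Fill ((a + b : ↥E).val) := by
      refine ⟨α + β, (altSub (V := V) (d + 1)).add_mem hαalt hβalt, ?_, rfl⟩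
      intro g
      rw [bdry_add α β g, hαb g, hβb g]
      rfl
    have h1 : p (a + b) ≤ normQ (α + β) := csInf_le (Fill_bdd _) hmem
    have h2 : normQ (α + β) ≤ normQ α + normQ β := normQ_add_le α β
    have h3 : p a = sInf (Fill a.val) := rfl
    have h4 : p b = sInf (Fill b.val) := rfl
    rw [h3, h4] at *
    linarith
  have pzero : p 0 = 0 := by
    have hmem : (0 : ℝ) ∈ Fill ((0 : ↥E).val) := by
      refine ⟨0, (altSub (V := V) (d + 1)).zero_mem, ?_, ?_⟩
      · intro g
        show (∑ v : V, (0 : ℚ)) = (0 : ↥E).val g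
        simp
      · unfold normQ
        simp
    refine le_antisymm (csInf_le (Fill_bdd _) hmem) ?_
    exact le_csInf ⟨0, hmem⟩ (fun x hx => Fill_lb _ x hx)
  have hsmul : ∀ (q : ℚ), 0 ≤ q → ∀ b : ↥E, p (q • b) = (q : ℝ) * p b := by
    intro q hq b
    rcases eq_or_lt_of_le hq with hq0 | hqpos
    · rw [← hq0]
      have : ((0 : ℚ) • b) = (0 : ↥E) := by simp
      rw [this, pzero]
      simp
    · have hqne : q ≠ 0 := ne_of_gt hqpos
      have hset : Fill ((q • b : ↥E).val) = (fun x => (q : ℝ) * x) '' Fill b.val := by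
        ext x
        constructor
        · rintro ⟨α, hαalt, hαb, rfl⟩
          refine ⟨normQ (q⁻¹ • α), ⟨q⁻¹ • α, (altSub (V := V) (d + 1)).smul_mem _ hαalt, ?_, rfl⟩, ?_⟩
          · intro g
            rw [bdry_smul q⁻¹ α g, hαb g]
            show q⁻¹ * ((q • b.val) g) = b.val g
            rw [Pi.smul_apply, smul_eq_mul, ← mul_assoc, inv_mul_cancel₀ hqne, one_mul]
          · show (q : ℝ) * normQ (q⁻¹ • α) = normQ α
            rw [normQ_smul q⁻¹ (by positivity) α, ← mul_assoc]
            rw [show ((q : ℝ)) * ((q⁻¹ : ℚ) : ℝ) = 1 by push_cast; field_simp]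
            rw [one_mul]
        · rintro ⟨x', ⟨α, hαalt, hαb, rfl⟩, rfl⟩
          refine ⟨q • α, (altSub (V := V) (d + 1)).smul_mem _ hαalt, ?_, (normQ_smul q hq α).symm⟩
          intro g
          rw [bdry_smul q α g, hαb g]
          rfl
      show sInf (Fill ((q • b : ↥E).val)) = (q : ℝ) * sInf (Fill b.val)
      rw [hset]
      have himg : (fun x : ℝ => (q : ℝ) * x) '' (Fill b.val) = (q : ℝ) • (Fill b.val) := by
        rw [← Set.image_smul]
        rfl
      rw [himg, Real.sInf_smul_of_nonneg (by positivity)]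
      rfl
  haveI hfd : FiniteDimensional ℚ ((Fin (d + 1) → V) → ℚ) := inferInstance
  obtain ⟨ψ, hψle, hψx₀⟩ := hahn_banach_rat p hadd hsmul ⟨Kq, hKE⟩
  obtain ⟨E', hcompl⟩ := Submodule.exists_isCompl E
  set π := E.linearProjOfIsCompl E' hcompl with hπ
  set Ψ : ((Fin (d + 1) → V) → ℚ) →ₗ[ℚ] ℝ := ψ.comp π with hΨ
  have hΨE : ∀ (b) (hb : b ∈ E), Ψ b = ψ ⟨b, hb⟩ := by
    intro b hb
    have hproj : π b = ⟨b, hb⟩ := Submodule.linearProjOfIsCompl_apply_left hcompl ⟨b, hb⟩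
    rw [hΨ, LinearMap.comp_apply, hproj]
  set Aq : (Fin (d + 1) → V) → ((Fin (d + 1) → V) → ℚ) :=
    fun f => fun g => ((simplexChain f g : ℤ) : ℚ) with hAq
  set φ : (Fin (d + 1) → V) → ℝ := fun f => Ψ (Aq f) with hφ
  have hφalt : IsAltChain d φ := by
    intro σ f
    have h1 : Aq (f ∘ ⇑σ) = (Equiv.Perm.sign σ : ℤ) • Aq f := by
      funext g
      show ((simplexChain (f ∘ ⇑σ) g : ℤ) : ℚ) = ((Equiv.Perm.sign σ : ℤ) • Aq f) g
      rw [simplexChain_comp_perm f σ g]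
      rw [Pi.smul_apply, zsmul_eq_mul, zsmul_eq_mul]
      push_cast
      rfl
    show Ψ (Aq (f ∘ ⇑σ)) = (Equiv.Perm.sign σ : ℤ) • Ψ (Aq f)
    rw [h1, map_zsmul]
  have hUF : UnitFlux d φ := by
    intro t ht
    set β : (Fin (d + 2) → V) → ℚ := fun h => ((simplexChain t h : ℤ) : ℚ) with hβ
    have hβalt : IsAltChain (d + 1) β := isAltChain_cast _ (simplexChain_alt t)
    have hbdry : bdry β = fun g => ∑ i : Fin (d + 2), ((-1 : ℚ) ^ (i : ℕ)) * Aq (t ∘ i.succAbove) g := by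
      funext g
      show (∑ v : V, ((simplexChain t (Fin.cons v g) : ℤ) : ℚ)) = _
      have hcast : (∑ v : V, ((simplexChain t (Fin.cons v g) : ℤ) : ℚ))
          = ((bdry (simplexChain t) g : ℤ) : ℚ) := by
        unfold bdry
        push_cast
        rfl
      rw [hcast, bdry_simplexChain t g]
      push_cast
      rfl
    have hsum : ∑ i : Fin (d + 2), (-1 : ℝ) ^ (i : ℕ) * φ (t ∘ i.succAbove) = Ψ (bdry β) := by
      have hfun : bdry β = ∑ i : Fin (d + 2), ((-1 : ℚ) ^ (i : ℕ)) • Aq (t ∘ i.succAbove) := by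
        rw [hbdry]
        funext g
        rw [Finset.sum_apply]
        rfl
      rw [hfun, map_sum]
      refine (Finset.sum_congr rfl fun i _ => ?_).symm
      rw [map_smul, Rat.smul_def]
      push_cast
      rfl
    rw [hsum]
    have hmemE : bdry β ∈ E := ⟨β, hβalt, rfl⟩
    rw [hΨE _ hmemE]
    have h1 : ψ ⟨bdry β, hmemE⟩ ≤ p ⟨bdry β, hmemE⟩ := hψle _
    have h2 : p ⟨bdry β, hmemE⟩ ≤ normQ β :=
      csInf_le (Fill_bdd _) ⟨β, hβalt, fun g => rfl, rfl⟩
    have h3 : normQ β = 1 := normQ_simplexChain t ht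
    linarith
  have hflux : fluxSum d φ K = VQ d K := by
    have hexp : ∑ f : Fin (d + 1) → V, Kq f • Aq f = ((Nat.factorial (d + 1) : ℚ)) • Kq := by
      funext g
      rw [Finset.sum_apply]
      show ∑ f : Fin (d + 1) → V, Kq f • (Aq f g) = _
      have := sum_mul_simplexChain Kq hKqalt g
      rw [show (∑ f : Fin (d + 1) → V, Kq f • (Aq f g))
          = ∑ f : Fin (d + 1) → V, Kq f * ((simplexChain f g : ℤ) : ℚ) from rfl, this]
      rfl
    have h1 : ∑ f : Fin (d + 1) → V, (K f : ℝ) * φ f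
        = ((Nat.factorial (d + 1) : ℝ)) * Ψ Kq := by
      calc ∑ f : Fin (d + 1) → V, (K f : ℝ) * φ f
          = ∑ f : Fin (d + 1) → V, Ψ (Kq f • Aq f) := by
            refine Finset.sum_congr rfl fun f _ => ?_
            have hcast : ((Kq f : ℚ) : ℝ) = (K f : ℝ) := by
              show (((K f : ℤ) : ℚ) : ℝ) = (K f : ℝ)
              push_cast
              rfl
            rw [map_smul, Rat.smul_def, hcast]
        _ = Ψ (∑ f : Fin (d + 1) → V, Kq f • Aq f) := (map_sum Ψ _ _).symm
        _ = Ψ (((Nat.factorial (d + 1) : ℚ)) • Kq) := by rw [hexp]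
        _ = ((Nat.factorial (d + 1) : ℝ)) * Ψ Kq := by
            rw [map_smul, Rat.smul_def]
            push_cast
            ring
    have h2 : Ψ Kq = p ⟨Kq, hKE⟩ := by
      rw [hΨE Kq hKE]
      exact hψx₀
    have h3 : p ⟨Kq, hKE⟩ = VQ d K := rfl
    unfold fluxSum
    rw [h1, h2, h3]
    field_simp
  exact ⟨φ, hφalt, hUF, hflux⟩
end

section
/- (Integration of a flux function at a vertex) Let φ₀ be a flux function on a finite vertex set S in dimension d satisfying the unit-flux constraint, and fix w ∈ S. Define φ on oriented d-simplices on S by φ(T) = φ₀(∂([w]∧T)) when w is not a vertex of T, where for T = [v₀,…,v_d] one sets [w]∧T = [w, v₀, …, v_d] and φ₀ is extended linearly to d-chains, and φ(T) = 0 when w is a vertex of T. Then: (i) φ is a flux function in dimension d; (ii) φ satisfies the unit-flux constraint; (iii) φ(T) ∈ [−1, 1] for every oriented d-simplex T; and (iv) for every admissible d-complex K on S with facets F₁,…,F_n, one has φ(F₁)+⋯+φ(F_n) = φ₀(F₁)+⋯+φ₀(F_n). -/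
open Equiv Equiv.Perm Finset

section
section Aux
variable {V : Type*}

lemma sq_sign {ι : Type*} [DecidableEq ι] [Fintype ι] (σ : Perm ι) :
    ((Perm.sign σ : ℤ) : ℝ) * ((Perm.sign σ : ℤ) : ℝ) = 1 := by
  rcases Int.units_eq_one_or (Perm.sign σ) with h | h <;> rw [h] <;> norm_num

lemma alt_mulR {n : ℕ} {c : (Fin (n + 1) → V) → ℝ} (hc : IsAltChain n c)
    (σ : Perm (Fin (n + 1))) (f : Fin (n + 1) → V) :
    c (f ∘ σ) = ((Perm.sign σ : ℤ) : ℝ) * c f := by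
  rw [hc σ f, zsmul_eq_mul]

lemma sign_cycleRange_symm {m : ℕ} (j : Fin (m + 1)) :
    ((Perm.sign (j.cycleRange).symm : ℤ) : ℝ) = (-1 : ℝ) ^ (j : ℕ) := by
  rw [Perm.sign_symm, Fin.sign_cycleRange]; simp

lemma star_half {n : ℕ} {c : (Fin (n + 1) → V) → ℝ} (hc : IsAltChain n c)
    (u : Fin (n + 2) → V) (σ : Perm (Fin (n + 2))) :
    ((Perm.sign σ : ℤ) : ℝ) * c (u ∘ ⇑σ ∘ Fin.succ)
      = (if σ 0 = 0 then (1 : ℝ) else -1) * c (u ∘ ⇑(Equiv.swap 0 (σ 0)) ∘ Fin.succ) := by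
  obtain ⟨⟨p, e⟩, hσ⟩ : ∃ pe : Fin (n + 2) × Perm (Fin (n + 1)),
      Equiv.Perm.decomposeFin.symm pe = σ := ⟨Equiv.Perm.decomposeFin σ, Equiv.symm_apply_apply _ _⟩
  subst hσ
  have h0 : Equiv.Perm.decomposeFin.symm (p, e) 0 = p :=
    Equiv.Perm.decomposeFin_symm_apply_zero p e
  have hcomp : u ∘ ⇑(Equiv.Perm.decomposeFin.symm (p, e)) ∘ Fin.succ
      = (u ∘ ⇑(Equiv.swap 0 p) ∘ Fin.succ) ∘ ⇑e := by
    funext x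
    simp [Function.comp, Equiv.Perm.decomposeFin_symm_apply_succ]
  rw [h0, hcomp, alt_mulR hc, Equiv.Perm.decomposeFin.symm_sign]
  have he := sq_sign e
  rcases Int.units_eq_one_or (Perm.sign e) with h | h <;>
    split_ifs <;> simp [h]

lemma star_eq {n : ℕ} {c : (Fin (n + 1) → V) → ℝ} (hc : IsAltChain n c)
    (u : Fin (n + 2) → V) (σ : Perm (Fin (n + 2))) :
    ((Perm.sign σ : ℤ) : ℝ) * c (u ∘ ⇑σ ∘ Fin.succ)
      = (-1 : ℝ) ^ ((σ 0 : ℕ)) * c (u ∘ (σ 0).succAbove) := by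
  have h1 := star_half hc u σ
  have h2 := star_half hc u ((σ 0).cycleRange).symm
  rw [Fin.cycleRange_symm_zero] at h2
  have hτs : u ∘ ⇑((σ 0).cycleRange).symm ∘ Fin.succ = u ∘ (σ 0).succAbove := by
    funext x; simp [Function.comp]
  rw [hτs, sign_cycleRange_symm] at h2
  rw [h1, ← h2]

end Aux

section Aux2
variable {V : Type*}

/-- coboundary -/
def cob {V : Type*} {n : ℕ} (c : (Fin (n + 1) → V) → ℝ) : (Fin (n + 2) → V) → ℝ :=
  fun u => ∑ i : Fin (n + 2), (-1 : ℝ) ^ (i : ℕ) * c (u ∘ i.succAbove)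

lemma isAltChain_cob {n : ℕ} {c : (Fin (n + 1) → V) → ℝ} (hc : IsAltChain n c) :
    IsAltChain (n + 1) (cob c) := by
  intro τ u
  rw [zsmul_eq_mul]
  simp only [cob]
  have hterm : ∀ p : Fin (n + 2), (-1 : ℝ) ^ (p : ℕ) * c ((u ∘ ⇑τ) ∘ p.succAbove)
      = ((Perm.sign τ : ℤ) : ℝ) * ((-1 : ℝ) ^ ((τ p : ℕ)) * c (u ∘ (τ p).succAbove)) := by
    intro p
    have h := star_eq hc u (τ * (p.cycleRange).symm)
    have happ0 : (τ * (p.cycleRange).symm) 0 = τ p := by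
      simp [Perm.mul_apply]
    have hcomp : u ∘ ⇑(τ * (p.cycleRange).symm) ∘ Fin.succ = (u ∘ ⇑τ) ∘ p.succAbove := by
      funext x; simp [Perm.mul_apply, Function.comp]
    rw [happ0, hcomp] at h
    have hsgn : ((Perm.sign (τ * (p.cycleRange).symm) : ℤ) : ℝ)
        = ((Perm.sign τ : ℤ) : ℝ) * (-1 : ℝ) ^ (p : ℕ) := by
      rw [map_mul]
      push_cast
      rw [sign_cycleRange_symm]
    rw [hsgn] at h
    have ha := sq_sign τ
    set a := ((Perm.sign τ : ℤ) : ℝ)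
    linear_combination a * h - ((-1 : ℝ) ^ (p : ℕ) * c ((u ∘ ⇑τ) ∘ p.succAbove)) * ha
  rw [Finset.sum_congr rfl fun p _ => hterm p, ← Finset.mul_sum]
  congr 1
  exact Equiv.sum_comp τ fun q => (-1 : ℝ) ^ (q : ℕ) * c (u ∘ q.succAbove)

lemma alt_eq_zero {m : ℕ} {c : (Fin (m + 1) → V) → ℝ} (hc : IsAltChain m c)
    {f : Fin (m + 1) → V} {i j : Fin (m + 1)} (hij : i ≠ j) (hf : f i = f j) : c f = 0 := by
  have hswap : f ∘ ⇑(Equiv.swap i j) = f := by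
    funext k
    rcases eq_or_ne k i with rfl | hki
    · simp [Equiv.swap_apply_left, hf.symm]
    rcases eq_or_ne k j with rfl | hkj
    · simp [Equiv.swap_apply_right, hf]
    · simp [Equiv.swap_apply_of_ne_of_ne hki hkj]
  have h := alt_mulR hc (Equiv.swap i j) f
  rw [hswap, Equiv.Perm.sign_swap hij] at h
  simp at h
  linarith

end Aux2

section Aux3
variable {V : Type*}

lemma val_succAbove' {m : ℕ} (p : Fin (m + 1)) (i : Fin m) :
    ((p.succAbove i : Fin (m + 1)) : ℕ) = if (i : ℕ) < (p : ℕ) then (i : ℕ) else (i : ℕ) + 1 := by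
  rcases lt_or_ge ((i : ℕ)) ((p : ℕ)) with h | h
  · rw [Fin.succAbove_of_castSucc_lt _ _ (by simpa [Fin.lt_def] using h), if_pos h]
    simp
  · rw [Fin.succAbove_of_le_castSucc _ _ (by simpa [Fin.le_def] using h), if_neg (not_lt.2 h)]
    simp

lemma ddzero {m : ℕ} (c : (Fin (m + 1) → V) → ℝ) (u : Fin (m + 3) → V) :
    ∑ j : Fin (m + 3), (-1 : ℝ) ^ (j : ℕ) * cob c (u ∘ j.succAbove) = 0 := by
  simp only [cob, Finset.mul_sum, ← mul_assoc, ← pow_add]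
  rw [← Finset.sum_product']
  set g : Fin (m + 3) × Fin (m + 2) → Fin (m + 3) × Fin (m + 2) := fun x =>
    if _ : (x.2 : ℕ) < (x.1 : ℕ) then
      (⟨x.2, by have := x.2.isLt; omega⟩, ⟨(x.1 : ℕ) - 1, by have := x.1.isLt; omega⟩)
    else (⟨(x.2 : ℕ) + 1, by have := x.2.isLt; omega⟩, ⟨x.1, by have := x.2.isLt; omega⟩)
    with hgdef
  have key : ∀ j : Fin (m + 3), ∀ k : Fin (m + 2),
      (u ∘ (g (j, k)).1.succAbove) ∘ (g (j, k)).2.succAbove = (u ∘ j.succAbove) ∘ k.succAbove := by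
    intro j k
    funext x
    simp only [Function.comp_apply]
    congr 1
    apply Fin.ext
    by_cases h : (k : ℕ) < (j : ℕ) <;>
      simp only [hgdef, dif_pos, dif_neg, h, if_true, if_false, dite_true, dite_false,
        val_succAbove'] <;>
      split_ifs <;> simp_all <;> omega
  apply Finset.sum_ninvolution g
  · intro a
    obtain ⟨j, k⟩ := a
    rw [key j k]
    by_cases h : (k : ℕ) < (j : ℕ)
    · have h1 : ((g (j, k)).1 : ℕ) = (k : ℕ) := by simp [hgdef, h]
      have h2 : ((g (j, k)).2 : ℕ) = (j : ℕ) - 1 := by simp [hgdef, h]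
      rw [h1, h2]
      have hx : (j : ℕ) + (k : ℕ) = ((k : ℕ) + ((j : ℕ) - 1)) + 1 := by omega
      rw [hx, pow_succ]
      ring
    · have h1 : ((g (j, k)).1 : ℕ) = (k : ℕ) + 1 := by simp [hgdef, h]
      have h2 : ((g (j, k)).2 : ℕ) = (j : ℕ) := by simp [hgdef, h]
      rw [h1, h2]
      have hx : ((k : ℕ) + 1) + (j : ℕ) = ((j : ℕ) + (k : ℕ)) + 1 := by omega
      rw [hx, pow_succ]
      ring
  · intro a _ hEq
    obtain ⟨j, k⟩ := a
    by_cases h : (k : ℕ) < (j : ℕ) <;>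
      simp only [hgdef, dif_pos, dif_neg, h, dite_true, dite_false, Prod.ext_iff,
        Fin.ext_iff] at hEq <;> omega
  · intro a; simp
  · intro a
    obtain ⟨j, k⟩ := a
    by_cases h : (k : ℕ) < (j : ℕ)
    · have h1 : g (j, k) = (⟨(k : ℕ), by have := k.isLt; omega⟩,
        ⟨(j : ℕ) - 1, by have := j.isLt; omega⟩) := by simp [hgdef, h]
      rw [h1]
      have h2 : ¬ (((⟨(j : ℕ) - 1, by have := j.isLt; omega⟩ : Fin (m + 2)) : ℕ)
          < ((⟨(k : ℕ), by have := k.isLt; omega⟩ : Fin (m + 3)) : ℕ)) := by simp; omega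
      simp only [hgdef, dif_neg, h2, Prod.ext_iff, Fin.ext_iff]
      constructor <;> simp <;> omega
    · have h1 : g (j, k) = (⟨(k : ℕ) + 1, by have := k.isLt; omega⟩,
        ⟨(j : ℕ), by have := k.isLt; omega⟩) := by simp [hgdef, h]
      rw [h1]
      have h2 : (((⟨(j : ℕ), by have := k.isLt; omega⟩ : Fin (m + 2)) : ℕ)
          < ((⟨(k : ℕ) + 1, by have := k.isLt; omega⟩ : Fin (m + 3)) : ℕ)) := by simp; omega
      simp only [hgdef, dif_pos, h2, Prod.ext_iff, Fin.ext_iff]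
      constructor <;> simp

end Aux3

section Aux4
variable {V : Type*}

lemma cons_comp_succ {n : ℕ} (x : V) (g : Fin (n + 1) → V) :
    Fin.cons x g ∘ Fin.succ = g := by
  funext k; simp

lemma cons_comp_cycleRangeSymm {n : ℕ} (u : Fin (n + 1) → V) (j : Fin (n + 1)) :
    u ∘ ⇑(j.cycleRange).symm = Fin.cons (u j) (u ∘ j.succAbove) := by
  funext k
  cases k using Fin.cases with
  | zero => simp
  | succ i => simp

lemma cons_comp_succAbove_succ {n : ℕ} (x : V) (g : Fin (n + 1) → V) (i : Fin (n + 1)) :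
    Fin.cons x g ∘ (Fin.succAbove i.succ) = Fin.cons x (g ∘ i.succAbove) := by
  funext k
  cases k using Fin.cases with
  | zero => simp
  | succ m => simp [Fin.succ_succAbove_succ]

lemma cons_comp_decomp {n : ℕ} (x : V) (g : Fin (n + 1) → V) (σ : Perm (Fin (n + 1))) :
    Fin.cons x (g ∘ ⇑σ) = Fin.cons x g ∘ ⇑(Equiv.Perm.decomposeFin.symm (0, σ)) := by
  funext k
  cases k using Fin.cases with
  | zero => simp [Equiv.Perm.decomposeFin_symm_apply_zero]
  | succ m => simp [Equiv.Perm.decomposeFin_symm_apply_succ]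

end Aux4

end

/-- Integration of a flux function at a vertex `w`: if `φ₀` is a flux function
satisfying the unit-flux constraint and `φ T = φ₀(∂([w] ∧ T))` for `T` not containing
`w` (and `φ T = 0` otherwise), then `φ` is a flux function satisfying the unit-flux
constraint, with values in `[-1, 1]`, and with the same facet sum as `φ₀` on every
admissible `d`-complex. -/
theorem stmt4 {V : Type*} [Fintype V] [DecidableEq V] (d : ℕ)
    (φ₀ : (Fin (d + 1) → V) → ℝ) (hφ₀ : IsAltChain d φ₀) (hunit₀ : UnitFlux d φ₀)
    (w : V) (φ : (Fin (d + 1) → V) → ℝ)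
    (hw : ∀ T : Fin (d + 1) → V, (∃ i, T i = w) → φ T = 0)
    (hnw : ∀ T : Fin (d + 1) → V, (¬ ∃ i, T i = w) →
      φ T = ∑ i : Fin (d + 2), (-1 : ℝ) ^ (i : ℕ) * φ₀ (Fin.cons w T ∘ i.succAbove)) :
    IsAltChain d φ ∧ UnitFlux d φ ∧
      (∀ T : Fin (d + 1) → V, Function.Injective T → φ T ∈ Set.Icc (-1 : ℝ) 1) ∧
      (∀ K : (Fin (d + 1) → V) → ℤ, IsAdmissible d K →
        fluxSum d φ K = fluxSum d φ₀ K) := by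
  have hΨalt : IsAltChain (d + 1) (cob φ₀) := isAltChain_cob hφ₀
  have hunit' : ∀ t : Fin (d + 2) → V, Function.Injective t → cob φ₀ t ≤ 1 := fun t ht =>
    hunit₀ t ht
  have hφeq : ∀ T : Fin (d + 1) → V, φ T = cob φ₀ (Fin.cons w T) := by
    intro T
    by_cases hc : ∃ i, T i = w
    · rw [hw T hc]
      obtain ⟨i, hi⟩ := hc
      refine (alt_eq_zero hΨalt (show (0 : Fin (d + 2)) ≠ i.succ from (Fin.succ_ne_zero i).symm)
        ?_).symm
      simp [hi]
    · rw [hnw T hc]; rfl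
  refine ⟨?_, ?_, ?_, ?_⟩
  · -- (i) alternating
    intro σ f
    rw [hφeq, hφeq, cons_comp_decomp, hΨalt (Equiv.Perm.decomposeFin.symm (0, σ)) (Fin.cons w f),
      Equiv.Perm.decomposeFin.symm_sign]
    simp
  · -- (ii) unit flux
    intro t ht
    by_cases hcase : ∃ j, t j = w
    · obtain ⟨j, hj⟩ := hcase
      have hmain : ∑ i : Fin (d + 2), (-1 : ℝ) ^ (i : ℕ) * φ (t ∘ i.succAbove) = cob φ₀ t := by
        rw [Finset.sum_eq_single j]
        · rw [hφeq]
          have h1 : Fin.cons w (t ∘ j.succAbove) = t ∘ ⇑(j.cycleRange).symm := by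
            rw [cons_comp_cycleRangeSymm, hj]
          rw [h1, alt_mulR hΨalt, sign_cycleRange_symm, ← mul_assoc, ← pow_add]
          have hev : Even ((j : ℕ) + (j : ℕ)) := ⟨(j : ℕ), rfl⟩
          rw [Even.neg_one_pow hev, one_mul]
        · intro i _ hij
          have hex : ∃ k, (t ∘ i.succAbove) k = w := by
            obtain ⟨k, hk⟩ := Fin.exists_succAbove_eq (show j ≠ i from fun h => hij h.symm)
            exact ⟨k, by simp only [Function.comp_apply, hk, hj]⟩
          rw [hw _ hex, mul_zero]
        · intro h; exact absurd (Finset.mem_univ j) h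
      rw [hmain]; exact hunit' t ht
    · have hsum : ∀ i : Fin (d + 2),
          φ (t ∘ i.succAbove) = cob φ₀ ((Fin.cons w t) ∘ (Fin.succAbove i.succ)) := by
        intro i
        rw [hφeq, cons_comp_succAbove_succ]
      have hdd := ddzero φ₀ (Fin.cons w t)
      rw [Fin.sum_univ_succ] at hdd
      have h0 : (Fin.cons w t) ∘ (Fin.succAbove (0 : Fin (d + 3))) = t := by
        rw [Fin.succAbove_zero, cons_comp_succ]
      rw [h0] at hdd
      have hflip : ∑ i : Fin (d + 2), (-1 : ℝ) ^ ((i.succ : Fin (d + 3)) : ℕ)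
            * cob φ₀ ((Fin.cons w t) ∘ (Fin.succAbove i.succ))
          = - ∑ i : Fin (d + 2), (-1 : ℝ) ^ (i : ℕ)
            * cob φ₀ ((Fin.cons w t) ∘ (Fin.succAbove i.succ)) := by
        rw [← Finset.sum_neg_distrib]
        refine Finset.sum_congr rfl fun i _ => ?_
        rw [Fin.val_succ, pow_succ]; ring
      rw [hflip] at hdd
      have hS : ∑ i : Fin (d + 2), (-1 : ℝ) ^ (i : ℕ) * φ (t ∘ i.succAbove) = cob φ₀ t := by
        rw [Finset.sum_congr rfl fun i _ => by rw [hsum i]]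
        simp only [Fin.val_zero, pow_zero, one_mul] at hdd
        linarith
      rw [hS]; exact hunit' t ht
  · -- (iii) values in [-1,1]
    intro T hT
    by_cases hc : ∃ i, T i = w
    · rw [hw T hc]; constructor <;> norm_num
    · rw [hφeq]
      have hinj : Function.Injective (Fin.cons w T) := by
        refine Fin.cons_injective_of_injective ?_ hT
        rintro ⟨i, hi⟩; exact hc ⟨i, hi⟩
      have hup : cob φ₀ (Fin.cons w T) ≤ 1 := hunit' _ hinj
      have hlow : -(cob φ₀ (Fin.cons w T)) ≤ 1 := by
        have h01 : (0 : Fin (d + 2)) ≠ 1 := by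
          simp [Fin.ext_iff]
        have h := hunit' ((Fin.cons w T) ∘ ⇑(Equiv.swap (0 : Fin (d + 2)) 1))
          (hinj.comp (Equiv.injective _))
        rw [alt_mulR hΨalt, Equiv.Perm.sign_swap h01] at h
        simpa using h
      exact ⟨by linarith, hup⟩
  · -- (iv) flux sums agree
    intro K hK
    simp only [fluxSum]
    congr 1
    have hA : ∀ f : Fin (d + 1) → V, φ f = φ₀ f
        - ∑ j : Fin (d + 1), (-1 : ℝ) ^ (j : ℕ) * φ₀ (Fin.cons w (f ∘ j.succAbove)) := by
      intro f
      rw [hφeq]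
      show ∑ i : Fin (d + 2), (-1 : ℝ) ^ (i : ℕ) * φ₀ (Fin.cons w f ∘ i.succAbove) = _
      rw [Fin.sum_univ_succ]
      have h0 : Fin.cons w f ∘ Fin.succAbove (0 : Fin (d + 2)) = f := by
        rw [Fin.succAbove_zero, cons_comp_succ]
      rw [h0]
      simp only [Fin.val_zero, pow_zero, one_mul, Fin.val_succ]
      have hterm : ∀ j : Fin (d + 1), (-1 : ℝ) ^ ((j : ℕ) + 1)
            * φ₀ (Fin.cons w f ∘ Fin.succAbove j.succ)
          = -((-1 : ℝ) ^ (j : ℕ) * φ₀ (Fin.cons w (f ∘ j.succAbove))) := by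
        intro j
        rw [cons_comp_succAbove_succ, pow_succ]; ring
      rw [Finset.sum_congr rfl fun j _ => hterm j, Finset.sum_neg_distrib]
      ring
    have hz : ∑ f : Fin (d + 1) → V, (K f : ℝ)
        * ∑ j : Fin (d + 1), (-1 : ℝ) ^ (j : ℕ) * φ₀ (Fin.cons w (f ∘ j.succAbove)) = 0 := by
      simp only [Finset.mul_sum]
      rw [Finset.sum_comm]
      refine Finset.sum_eq_zero fun j _ => ?_
      have hKf : ∀ f : Fin (d + 1) → V,
          (K f : ℝ) * ((-1 : ℝ) ^ (j : ℕ) * φ₀ (Fin.cons w (f ∘ j.succAbove)))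
          = (K (Fin.cons (f j) (f ∘ j.succAbove)) : ℝ) * φ₀ (Fin.cons w (f ∘ j.succAbove)) := by
        intro f
        have h1 : K (f ∘ ⇑(j.cycleRange).symm) = (Perm.sign (j.cycleRange).symm : ℤ) • K f :=
          hK.chain _ f
        rw [cons_comp_cycleRangeSymm] at h1
        have h2 : (K (Fin.cons (f j) (f ∘ j.succAbove)) : ℝ) = (-1 : ℝ) ^ (j : ℕ) * (K f : ℝ) := by
          rw [h1, zsmul_eq_mul]
          push_cast
          rw [sign_cycleRange_symm]
        rw [h2]; ring
      rw [Finset.sum_congr rfl fun f _ => hKf f]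
      rw [← Equiv.sum_comp (Fin.insertNthEquiv (fun _ => V) j)
        (fun f => (K (Fin.cons (f j) (f ∘ j.succAbove)) : ℝ) * φ₀ (Fin.cons w (f ∘ j.succAbove)))]
      have hE1 : ∀ pr : V × (Fin d → V), ((Fin.insertNthEquiv (fun _ => V) j) pr) j = pr.1 := by
        intro pr; simp [Fin.insertNthEquiv]
      have hE2 : ∀ pr : V × (Fin d → V),
          ((Fin.insertNthEquiv (fun _ => V) j) pr) ∘ j.succAbove = pr.2 := by
        intro pr; funext i; simp [Fin.insertNthEquiv]
      rw [Finset.sum_congr rfl fun pr _ => by rw [hE1 pr, hE2 pr]]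
      rw [Fintype.sum_prod_type, Finset.sum_comm]
      refine Finset.sum_eq_zero fun g _ => ?_
      dsimp only
      rw [← Finset.sum_mul]
      have hb : ∑ v : V, (K (Fin.cons v g) : ℝ) = ((bdry K g : ℤ) : ℝ) := by
        rw [bdry]; push_cast; rfl
      rw [hb, hK.closed g]
      simp
    have hsplit : ∑ f : Fin (d + 1) → V, (K f : ℝ) * φ f
        = ∑ f : Fin (d + 1) → V, ((K f : ℝ) * φ₀ f
          - (K f : ℝ) * ∑ j : Fin (d + 1), (-1 : ℝ) ^ (j : ℕ)
            * φ₀ (Fin.cons w (f ∘ j.succAbove))) :=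
      Finset.sum_congr rfl fun f _ => by rw [hA f]; ring
    rw [hsplit, Finset.sum_sub_distrib, hz, sub_zero]
end

section
/- (Additivity of V_ℚ under disjoint union) Let K and K' be admissible d-complexes on disjoint finite vertex sets S and S', and let K ⊔ K' denote their disjoint union, an admissible d-complex on S ⊔ S' whose chain is K + K'. Then V_ℚ(K ⊔ K') = V_ℚ(K) + V_ℚ(K'). -/
section Aux
open Finset Function

variable {V : Type*} [Fintype V] [DecidableEq V] {W : Type*} [Fintype W] [DecidableEq W]

lemma altQ_swap {n : ℕ} {c : (Fin (n+1) → V) → ℚ} (hc : IsAltChain n c)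
    {i j : Fin (n+1)} (hij : i ≠ j) (f : Fin (n+1) → V) :
    c (f ∘ Equiv.swap i j) = - c f := by
  have h := hc (Equiv.swap i j) f
  rw [Equiv.Perm.sign_swap hij] at h
  simpa using h

lemma altQ_zero_of_not_injective {n : ℕ} {c : (Fin (n+1) → V) → ℚ} (hc : IsAltChain n c)
    {f : Fin (n+1) → V} (hf : ¬ Function.Injective f) : c f = 0 := by
  simp only [Function.Injective] at hf
  push_neg at hf
  obtain ⟨i, j, hfij, hij⟩ := hf
  have h1 : f ∘ Equiv.swap i j = f := by
    funext x
    rcases eq_or_ne x i with rfl | hxi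
    · simpa [Equiv.swap_apply_left] using hfij.symm
    rcases eq_or_ne x j with rfl | hxj
    · simpa [Equiv.swap_apply_right] using hfij
    · simp [Equiv.swap_apply_of_ne_of_ne hxi hxj]
  have h2 := altQ_swap hc hij f
  rw [h1] at h2
  linarith

lemma sum_comp_perm {n : ℕ} (σ : Equiv.Perm (Fin n)) (F : (Fin n → V) → ℚ) :
    ∑ f : Fin n → V, F (f ∘ σ) = ∑ f : Fin n → V, F f :=
  Fintype.sum_equiv (Equiv.arrowCongr σ.symm (Equiv.refl V)) _ _ (fun f => by
    congr 1)

lemma altQ_sum_zero {n : ℕ} {c : (Fin (n+2) → V) → ℚ} (hc : IsAltChain (n+1) c) :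
    ∑ f : Fin (n+2) → V, c f = 0 := by
  have h01 : (0 : Fin (n+2)) ≠ 1 := by simp [Fin.ext_iff]
  have h := sum_comp_perm (Equiv.swap (0 : Fin (n+2)) 1) c
  have h2 : ∑ f : Fin (n+2) → V, c (f ∘ Equiv.swap (0 : Fin (n+2)) 1)
      = ∑ f : Fin (n+2) → V, - c f := by
    refine Finset.sum_congr rfl fun f _ => altQ_swap hc h01 f
  rw [h2] at h
  rw [Finset.sum_neg_distrib] at h
  linarith

lemma altQ_pullback (q : W → V) {n : ℕ} {c : (Fin (n+1) → V) → ℚ} (hc : IsAltChain n c) :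
    IsAltChain n (fun f => c (q ∘ f)) := fun σ f => hc σ (q ∘ f)

lemma altQ_add {n : ℕ} {c c' : (Fin (n+1) → V) → ℚ} (hc : IsAltChain n c)
    (hc' : IsAltChain n c') : IsAltChain n (fun f => c f + c' f) := by
  intro σ f
  simp only [hc σ f, hc' σ f, smul_add]

end Aux
set_option linter.unusedSectionVars false
section Aux2
open Finset Function

variable {V : Type*} [Fintype V] [DecidableEq V] {W : Type*} [Fintype W] [DecidableEq W]

lemma sum_cons_split {n : ℕ} {M : Type*} [AddCommMonoid M] (F : (Fin (n+1) → V) → M) :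
    ∑ h : Fin (n+1) → V, F h = ∑ v : V, ∑ g : Fin n → V, F (Fin.cons v g) := by
  rw [← (Fintype.sum_equiv (Fin.consEquiv (fun _ => V))
    (fun p => F (Fin.cons p.1 p.2)) F (fun p => rfl))]
  exact Fintype.sum_prod_type _

lemma sum_fun1 {M : Type*} [AddCommMonoid M] (F : (Fin 1 → V) → M) :
    ∑ g : Fin 1 → V, F g = ∑ x : V, F (fun _ => x) := by
  refine Fintype.sum_equiv (Equiv.funUnique (Fin 1) V) _ _ (fun g => ?_)
  congr 1
  funext i
  rw [Subsingleton.elim i 0]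
  rfl

lemma pushChain_alt (q : V → W) {n : ℕ} {c : (Fin (n+1) → V) → ℚ} (hc : IsAltChain n c) :
    IsAltChain n (pushChain q c) := by
  intro σ f
  have key : ∀ g : Fin (n+1) → V,
      (if q ∘ (g ∘ σ) = f ∘ σ then c (g ∘ σ) else 0)
        = (Equiv.Perm.sign σ : ℤ) • (if q ∘ g = f then c g else 0) := by
    intro g
    have hcond : (q ∘ (g ∘ σ) = f ∘ σ) ↔ (q ∘ g = f) := by
      constructor
      · intro h
        funext x
        have := congrFun h (σ.symm x)
        simpa using this
      · intro h
        funext x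
        simpa using congrFun h (σ x)
    rw [hc σ g]
    by_cases h : q ∘ g = f <;> simp [hcond, h]
  calc pushChain q c (f ∘ σ)
      = ∑ g : Fin (n+1) → V, (if q ∘ (g ∘ σ) = f ∘ σ then c (g ∘ σ) else 0) :=
        (sum_comp_perm σ (fun g => if q ∘ g = f ∘ σ then c g else 0)).symm
    _ = ∑ g : Fin (n+1) → V, (Equiv.Perm.sign σ : ℤ) • (if q ∘ g = f then c g else 0) := by
        simp only [key]
    _ = (Equiv.Perm.sign σ : ℤ) • pushChain q c f := by
        rw [← Finset.smul_sum]; rfl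

lemma pushChain_inj_apply {q : V → W} (hq : Function.Injective q) {n : ℕ}
    (c : (Fin n → V) → ℚ) (g : Fin n → V) : pushChain q c (q ∘ g) = c g := by
  unfold pushChain
  rw [Finset.sum_eq_single g]
  · simp
  · intro b _ hb
    exact if_neg (fun h => hb (hq.comp_left h))
  · simp

lemma pushChain_eq_zero {q : V → W} {n : ℕ} {c : (Fin n → V) → ℚ} {f : Fin n → W}
    (hf : ∀ g : Fin n → V, q ∘ g ≠ f) : pushChain q c f = 0 :=
  Finset.sum_eq_zero fun g _ => if_neg (hf g)

lemma sum_abs_pushChain_le (q : V → W) {n : ℕ} (c : (Fin n → V) → ℚ) :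
    ∑ f : Fin n → W, |pushChain q c f| ≤ ∑ g : Fin n → V, |c g| := by
  calc ∑ f : Fin n → W, |pushChain q c f|
      ≤ ∑ f : Fin n → W, ∑ g : Fin n → V, |if q ∘ g = f then c g else 0| :=
        Finset.sum_le_sum fun f _ => Finset.abs_sum_le_sum_abs _ _
    _ = ∑ g : Fin n → V, ∑ f : Fin n → W, (if q ∘ g = f then |c g| else 0) := by
        rw [Finset.sum_comm]
        refine Finset.sum_congr rfl fun f _ => Finset.sum_congr rfl fun g _ => ?_
        split_ifs <;> simp
    _ = ∑ g : Fin n → V, |c g| := by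
        refine Finset.sum_congr rfl fun g _ => ?_
        rw [Finset.sum_ite_eq univ (q ∘ g) (fun _ => |c g|)]
        simp

lemma sum_abs_pushChain_inj {q : V → W} (hq : Function.Injective q) {n : ℕ}
    (c : (Fin n → V) → ℚ) :
    ∑ f : Fin n → W, |pushChain q c f| = ∑ g : Fin n → V, |c g| := by
  have hinj : Function.Injective (fun g : Fin n → V => q ∘ g) := fun a b h => by
    funext x; exact hq (congrFun h x)
  have h1 : ∑ f : Fin n → W, |pushChain q c f|
      = ∑ f ∈ univ.image (fun g : Fin n → V => q ∘ g), |pushChain q c f| := by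
    refine (Finset.sum_subset (Finset.subset_univ _) ?_).symm
    intro f _ hf
    have hz : ∀ g : Fin n → V, q ∘ g ≠ f := by
      intro g hg
      exact hf (Finset.mem_image.mpr ⟨g, Finset.mem_univ g, hg⟩)
    rw [pushChain_eq_zero hz, abs_zero]
  have h2 : ∑ f ∈ univ.image (fun g : Fin n → V => q ∘ g), |pushChain q c f|
      = ∑ g : Fin n → V, |pushChain q c (q ∘ g)| :=
    Finset.sum_image (by intro a _ b _ h; exact hinj h)
  rw [h1, h2]
  exact Finset.sum_congr rfl fun g _ => by rw [pushChain_inj_apply hq]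

lemma bdry_pushChain (q : V → W) {n : ℕ} (c : (Fin (n+1) → V) → ℚ) (g : Fin n → W) :
    bdry (pushChain q c) g = pushChain q (bdry c) g := by
  unfold bdry pushChain
  have rhs : ∑ g' : Fin n → V, (if q ∘ g' = g then ∑ v : V, c (Fin.cons v g') else 0)
      = ∑ g' : Fin n → V, ∑ v : V, (if q ∘ g' = g then c (Fin.cons v g') else 0) := by
    refine Finset.sum_congr rfl fun g' _ => ?_
    split_ifs <;> simp
  rw [rhs]
  calc ∑ w : W, ∑ h : Fin (n+1) → V, (if q ∘ h = Fin.cons w g then c h else 0)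
      = ∑ w : W, ∑ v : V, ∑ g' : Fin n → V,
          (if q ∘ Fin.cons v g' = Fin.cons w g then c (Fin.cons v g') else 0) := by
        refine Finset.sum_congr rfl fun w _ => sum_cons_split _
    _ = ∑ v : V, ∑ g' : Fin n → V, ∑ w : W,
          (if q v = w then (if q ∘ g' = g then c (Fin.cons v g') else 0) else 0) := by
        rw [Finset.sum_comm]
        refine Finset.sum_congr rfl fun v _ => ?_
        rw [Finset.sum_comm]
        refine Finset.sum_congr rfl fun g' _ => Finset.sum_congr rfl fun w _ => ?_
        rw [Fin.comp_cons]
        simp only [Fin.cons_inj, ite_and]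
    _ = ∑ v : V, ∑ g' : Fin n → V, (if q ∘ g' = g then c (Fin.cons v g') else 0) := by
        refine Finset.sum_congr rfl fun v _ => Finset.sum_congr rfl fun g' _ => ?_
        rw [Finset.sum_ite_eq univ (q v) (fun _ => if q ∘ g' = g then c (Fin.cons v g') else 0)]
        simp
    _ = ∑ g' : Fin n → V, ∑ v : V, (if q ∘ g' = g then c (Fin.cons v g') else 0) :=
        Finset.sum_comm

end Aux2
set_option linter.unusedSectionVars false
section Aux3
open Finset Function

variable {V : Type*} [Fintype V] [DecidableEq V] {W : Type*} [Fintype W] [DecidableEq W]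

lemma normQ_eq {n : ℕ} (c : (Fin (n+1) → V) → ℚ) :
    normQ c = ((∑ f : Fin (n+1) → V, |c f| : ℚ) : ℝ) / (Nat.factorial (n+1) : ℝ) := by
  unfold normQ
  push_cast
  rfl

lemma normQ_nonneg {n : ℕ} (c : (Fin (n+1) → V) → ℚ) : 0 ≤ normQ c := by
  unfold normQ
  apply div_nonneg
  · exact Finset.sum_nonneg fun f _ => abs_nonneg _
  · positivity

lemma VQ_le {d : ℕ} (K : (Fin (d+1) → V) → ℤ) {α : (Fin (d+2) → V) → ℚ}
    (h1 : IsAltChain (d+1) α) (h2 : ∀ g, bdry α g = (K g : ℚ)) :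
    VQ d K ≤ normQ α := by
  apply csInf_le
  · exact ⟨0, fun x ⟨β, _, _, hx⟩ => hx ▸ normQ_nonneg β⟩
  · exact ⟨α, h1, h2, rfl⟩

lemma le_VQ {d : ℕ} (K : (Fin (d+1) → V) → ℤ) {b : ℝ}
    (hne : ∃ α : (Fin (d+2) → V) → ℚ, IsAltChain (d+1) α ∧ ∀ g, bdry α g = (K g : ℚ))
    (hb : ∀ α : (Fin (d+2) → V) → ℚ, IsAltChain (d+1) α → (∀ g, bdry α g = (K g : ℚ)) →
      b ≤ normQ α) : b ≤ VQ d K := by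
  apply le_csInf
  · obtain ⟨α, h1, h2⟩ := hne
    exact ⟨normQ α, α, h1, h2, rfl⟩
  · rintro x ⟨α, h1, h2, rfl⟩
    exact hb α h1 h2

lemma altQ_cast {n : ℕ} {K : (Fin (n+1) → V) → ℤ} (hK : IsAltChain n K) :
    IsAltChain n (fun f => (K f : ℚ)) := by
  intro σ f
  show ((K (f ∘ σ) : ℤ) : ℚ) = _
  rw [hK σ f, zsmul_eq_mul, zsmul_eq_mul]
  push_cast
  ring

lemma bdry_cast {n : ℕ} (K : (Fin (n+1) → V) → ℤ) (g : Fin n → V) :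
    bdry (fun f => (K f : ℚ)) g = ((bdry K g : ℤ) : ℚ) := by
  unfold bdry
  push_cast
  rfl

/-- The cone filling. -/
noncomputable def coneFill {d : ℕ} (v₀ : V) (c : (Fin (d+1) → V) → ℚ) :
    (Fin (d+2) → V) → ℚ := fun f =>
  ((Nat.factorial (d+1) : ℚ))⁻¹ * ∑ σ : Equiv.Perm (Fin (d+2)),
    ((Equiv.Perm.sign σ : ℤ) : ℚ) * (if f (σ 0) = v₀ then c (f ∘ σ ∘ Fin.succ) else 0)

lemma coneFill_alt {d : ℕ} (v₀ : V) (c : (Fin (d+1) → V) → ℚ) :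
    IsAltChain (d+1) (coneFill v₀ c) := by
  intro τ f
  have key : (∑ σ : Equiv.Perm (Fin (d+2)), ((Equiv.Perm.sign σ : ℤ) : ℚ) *
        (if (f ∘ τ) (σ 0) = v₀ then c ((f ∘ τ) ∘ σ ∘ Fin.succ) else 0))
      = ((Equiv.Perm.sign τ : ℤ) : ℚ) * ∑ σ : Equiv.Perm (Fin (d+2)),
        ((Equiv.Perm.sign σ : ℤ) : ℚ) * (if f (σ 0) = v₀ then c (f ∘ σ ∘ Fin.succ) else 0) := by
    have hre := Fintype.sum_equiv (Equiv.mulLeft τ)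
      (fun σ : Equiv.Perm (Fin (d+2)) =>
        ((Equiv.Perm.sign (τ * σ) : ℤ) : ℚ) *
          (if f ((τ * σ) 0) = v₀ then c (f ∘ (τ * σ) ∘ Fin.succ) else 0))
      (fun σ : Equiv.Perm (Fin (d+2)) =>
        ((Equiv.Perm.sign σ : ℤ) : ℚ) * (if f (σ 0) = v₀ then c (f ∘ σ ∘ Fin.succ) else 0))
      (fun σ => rfl)
    calc ∑ σ : Equiv.Perm (Fin (d+2)), ((Equiv.Perm.sign σ : ℤ) : ℚ) *
            (if (f ∘ τ) (σ 0) = v₀ then c ((f ∘ τ) ∘ σ ∘ Fin.succ) else 0)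
        = ∑ σ : Equiv.Perm (Fin (d+2)), ((Equiv.Perm.sign τ : ℤ) : ℚ) *
            (((Equiv.Perm.sign (τ * σ) : ℤ) : ℚ) *
            (if f ((τ * σ) 0) = v₀ then c (f ∘ (τ * σ) ∘ Fin.succ) else 0)) := by
          refine Finset.sum_congr rfl fun σ _ => ?_
          have harg : (f ∘ τ) ∘ σ ∘ Fin.succ = f ∘ (τ * σ) ∘ Fin.succ := rfl
          have harg2 : (f ∘ τ) (σ 0) = f ((τ * σ) 0) := rfl
          rw [harg, harg2, map_mul]
          rcases Int.units_eq_one_or (Equiv.Perm.sign σ) with h1 | h1 <;>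
            rcases Int.units_eq_one_or (Equiv.Perm.sign τ) with h2 | h2 <;>
            · rw [h1, h2]; push_cast; ring
      _ = ((Equiv.Perm.sign τ : ℤ) : ℚ) * ∑ σ : Equiv.Perm (Fin (d+2)),
            (((Equiv.Perm.sign (τ * σ) : ℤ) : ℚ) *
            (if f ((τ * σ) 0) = v₀ then c (f ∘ (τ * σ) ∘ Fin.succ) else 0)) := by
          rw [Finset.mul_sum]
      _ = ((Equiv.Perm.sign τ : ℤ) : ℚ) * ∑ σ : Equiv.Perm (Fin (d+2)),
            ((Equiv.Perm.sign σ : ℤ) : ℚ) *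
            (if f (σ 0) = v₀ then c (f ∘ σ ∘ Fin.succ) else 0) := by rw [hre]
  simp only [coneFill]
  rw [key, zsmul_eq_mul]
  ring

end Aux3
set_option linter.unusedSectionVars false
set_option maxHeartbeats 1000000
section Aux4
open Finset Function

variable {V : Type*} [Fintype V] [DecidableEq V]

lemma cons_comp_succAbove {n : ℕ} (v : V) (g : Fin (n+1) → V) (j : Fin (n+1)) :
    (Fin.cons v g : Fin (n+2) → V) ∘ (Fin.succAbove j.succ) = Fin.cons v (g ∘ j.succAbove) := by
  funext x
  refine Fin.cases ?_ (fun y => ?_) x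
  · simp
  · simp [Fin.succ_succAbove_succ]

lemma bdry_coneFill' {d : ℕ} (v₀ : V) (c : (Fin (d+1) → V) → ℚ) (hc : IsAltChain d c)
    (hcl : ∀ g, bdry c g = 0) (g : Fin (d+1) → V) :
    bdry (coneFill v₀ c) g = c g := by
  classical
  unfold bdry
  simp only [coneFill]
  rw [← Finset.mul_sum]
  have step1 : ∀ v : V, (∑ σ : Equiv.Perm (Fin (d+2)), ((Equiv.Perm.sign σ : ℤ) : ℚ) *
      (if (Fin.cons v g : Fin (d+2) → V) (σ 0) = v₀ then c ((Fin.cons v g : Fin (d+2) → V) ∘ σ ∘ Fin.succ) else 0))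
      = ∑ p : Fin (d+2), (Nat.factorial (d+1) : ℚ) * ((if p = 0 then (1:ℚ) else -1) *
          (if (Fin.cons v g : Fin (d+2) → V) p = v₀
            then c (fun y => (Fin.cons v g : Fin (d+2) → V) (Equiv.swap 0 p y.succ)) else 0)) := by
    intro v
    have hre := Fintype.sum_equiv (Equiv.Perm.decomposeFin.symm :
        Fin (d+2) × Equiv.Perm (Fin (d+1)) ≃ Equiv.Perm (Fin (d+2)))
      (fun pe : Fin (d+2) × Equiv.Perm (Fin (d+1)) =>
        ((Equiv.Perm.sign (Equiv.Perm.decomposeFin.symm pe) : ℤ) : ℚ) *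
          (if (Fin.cons v g : Fin (d+2) → V) ((Equiv.Perm.decomposeFin.symm pe) 0) = v₀
            then c ((Fin.cons v g : Fin (d+2) → V) ∘ (Equiv.Perm.decomposeFin.symm pe) ∘ Fin.succ) else 0))
      (fun σ : Equiv.Perm (Fin (d+2)) =>
        ((Equiv.Perm.sign σ : ℤ) : ℚ) *
          (if (Fin.cons v g : Fin (d+2) → V) (σ 0) = v₀ then c ((Fin.cons v g : Fin (d+2) → V) ∘ σ ∘ Fin.succ) else 0))
      (fun pe => rfl)
    rw [← hre, Fintype.sum_prod_type]
    refine Finset.sum_congr rfl fun p _ => ?_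
    have he : ∀ e : Equiv.Perm (Fin (d+1)),
        ((Equiv.Perm.sign (Equiv.Perm.decomposeFin.symm (p, e)) : ℤ) : ℚ) *
          (if (Fin.cons v g : Fin (d+2) → V) ((Equiv.Perm.decomposeFin.symm (p, e)) 0) = v₀
            then c ((Fin.cons v g : Fin (d+2) → V) ∘ (Equiv.Perm.decomposeFin.symm (p, e)) ∘ Fin.succ) else 0)
        = (if p = 0 then (1:ℚ) else -1) *
          (if (Fin.cons v g : Fin (d+2) → V) p = v₀
            then c (fun y => (Fin.cons v g : Fin (d+2) → V) (Equiv.swap 0 p y.succ)) else 0) := by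
      intro e
      have h0 : (Equiv.Perm.decomposeFin.symm (p, e)) 0 = p :=
        Equiv.Perm.decomposeFin_symm_apply_zero p e
      have hcomp : (Fin.cons v g : Fin (d+2) → V) ∘ (Equiv.Perm.decomposeFin.symm (p, e)) ∘ Fin.succ
          = (fun y => (Fin.cons v g : Fin (d+2) → V) (Equiv.swap 0 p y.succ)) ∘ e := by
        funext x
        simp [Equiv.Perm.decomposeFin_symm_apply_succ]
      rw [h0, hcomp, hc e, Equiv.Perm.decomposeFin.symm_sign]
      rcases Int.units_eq_one_or (Equiv.Perm.sign e) with h1 | h1 <;>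
        by_cases h2 : p = 0 <;> by_cases h3 : (Fin.cons v g : Fin (d+2) → V) p = v₀ <;>
        simp [h1, h2, h3, zsmul_eq_mul]
    rw [Finset.sum_congr rfl (fun e _ => he e), Finset.sum_const, Finset.card_univ,
      Fintype.card_perm, Fintype.card_fin, nsmul_eq_mul]
  rw [Finset.sum_congr rfl (fun v _ => step1 v)]
  rw [Finset.sum_comm]
  have hp0 : ∑ v : V, (Nat.factorial (d+1) : ℚ) * ((if (0 : Fin (d+2)) = 0 then (1:ℚ) else -1) *
      (if (Fin.cons v g : Fin (d+2) → V) 0 = v₀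
        then c (fun y => (Fin.cons v g : Fin (d+2) → V) (Equiv.swap 0 0 y.succ)) else 0))
      = (Nat.factorial (d+1) : ℚ) * c g := by
    rw [← Finset.mul_sum]
    congr 1
    have key : ∀ v : V, ((if (0 : Fin (d+2)) = 0 then (1:ℚ) else -1) *
        (if (Fin.cons v g : Fin (d+2) → V) 0 = v₀
          then c (fun y => (Fin.cons v g : Fin (d+2) → V) (Equiv.swap 0 0 y.succ)) else 0))
        = if v = v₀ then c g else 0 := by
      intro v
      have harg : (fun y : Fin (d+1) => (Fin.cons v g : Fin (d+2) → V) (Equiv.swap (0 : Fin (d+2)) 0 y.succ)) = g := by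
        funext y
        rw [Equiv.swap_self]
        simp
      rw [harg]
      simp
    rw [Finset.sum_congr rfl (fun v _ => key v)]
    simp
  have hpsucc : ∀ j : Fin (d+1), (∑ v : V,
      (Nat.factorial (d+1) : ℚ) * ((if (j.succ : Fin (d+2)) = 0 then (1:ℚ) else -1) *
      (if (Fin.cons v g : Fin (d+2) → V) j.succ = v₀
        then c (fun y => (Fin.cons v g : Fin (d+2) → V) (Equiv.swap 0 j.succ y.succ)) else 0)))
      = 0 := by
    intro j
    have key : ∀ v : V, ((if (j.succ : Fin (d+2)) = 0 then (1:ℚ) else -1) *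
        (if (Fin.cons v g : Fin (d+2) → V) j.succ = v₀
          then c (fun y => (Fin.cons v g : Fin (d+2) → V) (Equiv.swap 0 j.succ y.succ)) else 0))
        = -(if g j = v₀
            then ((Equiv.Perm.sign (Fin.cycleRange j) : ℤ) : ℚ) * c (Fin.cons v (g ∘ j.succAbove))
            else 0) := by
      intro v
      have harg : (fun y : Fin (d+1) => (Fin.cons v g : Fin (d+2) → V) (Equiv.swap (0 : Fin (d+2)) j.succ y.succ))
          = (Fin.cons v (g ∘ j.succAbove)) ∘ (Fin.cycleRange j) := by
        funext y
        have h1 := Fin.succAbove_cycleRange j y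
        rw [← h1]
        exact congrFun (cons_comp_succAbove v g j) (Fin.cycleRange j y)
      rw [harg, hc (Fin.cycleRange j)]
      rcases eq_or_ne (g j) v₀ with h4 | h4 <;>
        simp [Fin.succ_ne_zero, h4, zsmul_eq_mul]
    rw [Finset.sum_congr rfl (fun v _ => by rw [key v])]
    rcases eq_or_ne (g j) v₀ with h | h
    · simp only [h, if_pos rfl]
      have hb := hcl (g ∘ j.succAbove)
      unfold bdry at hb
      calc ∑ v : V, (Nat.factorial (d+1) : ℚ) *
            -(((Equiv.Perm.sign (Fin.cycleRange j) : ℤ) : ℚ) * c (Fin.cons v (g ∘ j.succAbove)))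
          = (-( (Nat.factorial (d+1) : ℚ) * ((Equiv.Perm.sign (Fin.cycleRange j) : ℤ) : ℚ))) *
            ∑ v : V, c (Fin.cons v (g ∘ j.succAbove)) := by
            rw [Finset.mul_sum]
            exact Finset.sum_congr rfl fun v _ => by ring
        _ = 0 := by rw [hb, mul_zero]
    · simp [h]
  rw [Fin.sum_univ_succ, hp0, Finset.sum_congr rfl (fun j _ => hpsucc j),
    Finset.sum_const_zero, add_zero]
  have hfact : (Nat.factorial (d+1) : ℚ) ≠ 0 := by positivity
  rw [inv_mul_cancel_left₀ hfact]

lemma exists_fill {d : ℕ} (c : (Fin (d+1) → V) → ℚ) (hc : IsAltChain d c)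
    (hcl : ∀ g, bdry c g = 0) :
    ∃ α : (Fin (d+2) → V) → ℚ, IsAltChain (d+1) α ∧ ∀ g, bdry α g = c g := by
  rcases isEmpty_or_nonempty V with hV | hV
  · exact ⟨fun _ => 0, fun σ f => by simp, fun g => (hV.false (g 0)).elim⟩
  obtain ⟨v₀⟩ := hV
  exact ⟨coneFill v₀ c, coneFill_alt v₀ c, bdry_coneFill' v₀ c hc hcl⟩

end Aux4
section Aux5
set_option linter.unusedSectionVars false
open Finset Function

variable {V : Type*} [Fintype V] [DecidableEq V] {V' : Type*} [Fintype V'] [DecidableEq V']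

lemma bdry_add {n : ℕ} (a b : (Fin (n+1) → V) → ℚ) (g : Fin n → V) :
    bdry (fun f => a f + b f) g = bdry a g + bdry b g := by
  unfold bdry
  rw [← Finset.sum_add_distrib]

lemma cast_unionChain {n : ℕ} (K : (Fin n → V) → ℤ) (K' : (Fin n → V') → ℤ)
    (f : Fin n → V ⊕ V') :
    ((unionChain K K' f : ℤ) : ℚ)
      = pushChain Sum.inl (fun g => (K g : ℚ)) f + pushChain Sum.inr (fun g => (K' g : ℚ)) f := by
  unfold unionChain pushChain
  push_cast [apply_ite (fun z : ℤ => (z : ℚ))]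
  rfl

lemma union_fill {d : ℕ} (K : (Fin (d+1) → V) → ℤ) (K' : (Fin (d+1) → V') → ℤ)
    {α : (Fin (d+2) → V) → ℚ} {α' : (Fin (d+2) → V') → ℚ}
    (ha1 : IsAltChain (d+1) α) (ha2 : ∀ g, bdry α g = (K g : ℚ))
    (hb1 : IsAltChain (d+1) α') (hb2 : ∀ g, bdry α' g = (K' g : ℚ)) :
    IsAltChain (d+1) (fun f => pushChain Sum.inl α f + pushChain Sum.inr α' f)
      ∧ (∀ g, bdry (fun f => pushChain Sum.inl α f + pushChain Sum.inr α' f) g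
          = ((unionChain K K' g : ℤ) : ℚ))
      ∧ normQ (fun f => pushChain Sum.inl α f + pushChain Sum.inr α' f)
          = normQ α + normQ α' := by
  refine ⟨altQ_add (pushChain_alt Sum.inl ha1) (pushChain_alt Sum.inr hb1), fun g => ?_, ?_⟩
  · rw [bdry_add, bdry_pushChain, bdry_pushChain, cast_unionChain]
    congr 1
    · exact congrArg (fun c => pushChain Sum.inl c g) (funext ha2)
    · exact congrArg (fun c => pushChain Sum.inr c g) (funext hb2)
  · have habs : ∀ f : Fin (d+2) → V ⊕ V',
        |pushChain Sum.inl α f + pushChain Sum.inr α' f|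
          = |pushChain Sum.inl α f| + |pushChain Sum.inr α' f| := by
      intro f
      rcases h0 : f 0 with x | x
      · have hz : pushChain Sum.inr α' f = 0 := by
          apply pushChain_eq_zero
          intro g hg
          have := congrFun hg 0
          rw [h0] at this
          exact Sum.inr_ne_inl this
        rw [hz]
        simp
      · have hz : pushChain Sum.inl α f = 0 := by
          apply pushChain_eq_zero
          intro g hg
          have := congrFun hg 0
          rw [h0] at this
          exact Sum.inl_ne_inr this
        rw [hz]
        simp
    have hsum : ∑ f : Fin (d+2) → V ⊕ V', |pushChain Sum.inl α f + pushChain Sum.inr α' f|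
        = (∑ f : Fin (d+2) → V, |α f|) + ∑ f : Fin (d+2) → V', |α' f| := by
      rw [Finset.sum_congr rfl (fun f _ => habs f), Finset.sum_add_distrib,
        sum_abs_pushChain_inj Sum.inl_injective, sum_abs_pushChain_inj Sum.inr_injective]
    rw [normQ_eq, normQ_eq, normQ_eq, hsum, ← add_div]
    push_cast
    ring

lemma VQ_union_le {d : ℕ} (K : (Fin (d+1) → V) → ℤ) (K' : (Fin (d+1) → V') → ℤ)
    (hK : IsAdmissible d K) (hK' : IsAdmissible d K') :
    VQ d (unionChain K K') ≤ VQ d K + VQ d K' := by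
  have hKfill : ∃ α : (Fin (d+2) → V) → ℚ, IsAltChain (d+1) α ∧ ∀ g, bdry α g = (K g : ℚ) := by
    obtain ⟨α, h1, h2⟩ := exists_fill (fun f => (K f : ℚ)) (altQ_cast hK.chain)
      (fun g => by rw [bdry_cast, hK.closed g]; norm_num)
    exact ⟨α, h1, h2⟩
  have hK'fill : ∃ α : (Fin (d+2) → V') → ℚ, IsAltChain (d+1) α ∧ ∀ g, bdry α g = (K' g : ℚ) := by
    obtain ⟨α, h1, h2⟩ := exists_fill (fun f => (K' f : ℚ)) (altQ_cast hK'.chain)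
      (fun g => by rw [bdry_cast, hK'.closed g]; norm_num)
    exact ⟨α, h1, h2⟩
  have key : ∀ α : (Fin (d+2) → V) → ℚ, IsAltChain (d+1) α → (∀ g, bdry α g = (K g : ℚ)) →
      ∀ α' : (Fin (d+2) → V') → ℚ, IsAltChain (d+1) α' → (∀ g, bdry α' g = (K' g : ℚ)) →
      VQ d (unionChain K K') ≤ normQ α + normQ α' := by
    intro α h1 h2 α' h1' h2'
    obtain ⟨u1, u2, u3⟩ := union_fill K K' h1 h2 h1' h2'
    rw [← u3]
    exact VQ_le (unionChain K K') u1 u2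
  have step : ∀ α' : (Fin (d+2) → V') → ℚ, IsAltChain (d+1) α' →
      (∀ g, bdry α' g = (K' g : ℚ)) → VQ d (unionChain K K') - VQ d K ≤ normQ α' := by
    intro α' h1' h2'
    have : VQ d (unionChain K K') - normQ α' ≤ VQ d K := by
      apply le_VQ K hKfill
      intro α h1 h2
      have := key α h1 h2 α' h1' h2'
      linarith
    linarith
  have final : VQ d (unionChain K K') - VQ d K ≤ VQ d K' := by
    apply le_VQ K' hK'fill
    intro α' h1' h2'
    exact step α' h1' h2'
  linarith

end Aux5
section Aux6
set_option linter.unusedSectionVars false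
open Finset Function

variable {V : Type*} [Fintype V] [DecidableEq V] {W : Type*} [Fintype W] [DecidableEq W]
variable {V' : Type*} [Fintype V'] [DecidableEq V']

lemma pushChain_id {n : ℕ} (c : (Fin n → V) → ℚ) (f : Fin n → V) :
    pushChain id c f = c f := by
  unfold pushChain
  have : ∀ g : Fin n → V, (if id ∘ g = f then c g else 0) = (if g = f then c g else 0) := by
    intro g
    simp
  rw [Finset.sum_congr rfl (fun g _ => this g), Finset.sum_ite_eq' univ f c]
  simp

lemma pushChain_comp {n : ℕ} (q : W → V') (p : V → W) (c : (Fin n → V) → ℚ)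
    (f : Fin n → V') : pushChain q (pushChain p c) f = pushChain (q ∘ p) c f := by
  unfold pushChain
  have : ∀ h : Fin n → W, (if q ∘ h = f then ∑ g : Fin n → V, (if p ∘ g = h then c g else 0) else 0)
      = ∑ g : Fin n → V, (if p ∘ g = h then (if q ∘ h = f then c g else 0) else 0) := by
    intro h
    split_ifs with hq
    · simp [hq]
    · simp [hq]
  rw [Finset.sum_congr rfl (fun h _ => this h), Finset.sum_comm]
  refine Finset.sum_congr rfl fun g _ => ?_
  rw [Finset.sum_eq_single (p ∘ g)]
  · simp [Function.comp_assoc]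
  · intro h _ hh
    exact if_neg fun hc => hh hc.symm
  · simp

lemma pushChain_addc {n : ℕ} (q : V → W) (a b : (Fin n → V) → ℚ) (f : Fin n → W) :
    pushChain q (fun g => a g + b g) f = pushChain q a f + pushChain q b f := by
  unfold pushChain
  rw [← Finset.sum_add_distrib]
  refine Finset.sum_congr rfl fun g _ => ?_
  split_ifs <;> simp

lemma sum_abs_pullback_le {q : V → W} (hq : Function.Injective q) {n : ℕ}
    (α : (Fin n → W) → ℚ) :
    ∑ g : Fin n → V, |α (q ∘ g)| ≤ ∑ h : Fin n → W, |α h| := by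
  have hinj : ∀ a ∈ univ, ∀ b ∈ univ, (fun g : Fin n → V => q ∘ g) a = (fun g => q ∘ g) b → a = b :=
    fun a _ b _ h => funext fun x => hq (congrFun h x)
  have himg := Finset.sum_image (g := fun g : Fin n → V => q ∘ g)
    (f := fun h : Fin n → W => |α h|) (s := univ) hinj
  rw [← himg]
  exact Finset.sum_le_sum_of_subset_of_nonneg (Finset.subset_univ _)
    (fun h _ _ => abs_nonneg _)

/-- transport along `Sum.swap`. -/
lemma pushChain_inl_swap {n : ℕ} (c : (Fin n → V) → ℚ) (g : Fin n → V' ⊕ V) :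
    pushChain Sum.inl c (Sum.swap ∘ g) = pushChain Sum.inr c g := by
  unfold pushChain
  refine Finset.sum_congr rfl fun h _ => ?_
  have : (Sum.inl ∘ h = Sum.swap ∘ g) ↔ (Sum.inr ∘ h = g) := by
    constructor
    · intro hh
      funext x
      have h2 := congrArg Sum.swap (congrFun hh x)
      simpa using h2
    · intro hh
      funext x
      have h2 := congrFun hh x
      show Sum.inl (h x) = Sum.swap (g x)
      rw [← h2]
      rfl
  exact if_congr this rfl rfl

lemma pushChain_inr_swap {n : ℕ} (c : (Fin n → V') → ℚ) (g : Fin n → V' ⊕ V) :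
    pushChain Sum.inr c (Sum.swap ∘ g) = pushChain Sum.inl c g := by
  unfold pushChain
  refine Finset.sum_congr rfl fun h _ => ?_
  have : (Sum.inr ∘ h = Sum.swap ∘ g) ↔ (Sum.inl ∘ h = g) := by
    constructor
    · intro hh
      funext x
      have h2 := congrArg Sum.swap (congrFun hh x)
      simpa using h2
    · intro hh
      funext x
      have h2 := congrFun hh x
      show Sum.inr (h x) = Sum.swap (g x)
      rw [← h2]
      rfl
  exact if_congr this rfl rfl

lemma bdry_swapped {n : ℕ} (α : (Fin (n+1) → V ⊕ V') → ℚ) (g : Fin n → V' ⊕ V) :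
    bdry (fun f => α (Sum.swap ∘ f)) g = bdry α (Sum.swap ∘ g) := by
  unfold bdry
  exact Fintype.sum_equiv (Equiv.sumComm V' V)
    (fun w => α (Sum.swap ∘ Fin.cons w g)) (fun u => α (Fin.cons u (Sum.swap ∘ g)))
    (fun w => congrArg α (Fin.comp_cons Sum.swap w g))

lemma sum_abs_swapped {n : ℕ} (α : (Fin n → V ⊕ V') → ℚ) :
    ∑ f : Fin n → V' ⊕ V, |α (Sum.swap ∘ f)| = ∑ f : Fin n → V ⊕ V', |α f| :=
  Fintype.sum_equiv (Equiv.arrowCongr (Equiv.refl (Fin n)) (Equiv.sumComm V' V))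
    _ _ fun f => by
      congr 1

lemma pair_swap {α : (Fin 2 → V) → ℚ} (h : IsAltChain 1 α) (a b : V) :
    α (Fin.cons a (fun _ => b)) = - α (Fin.cons b (fun _ => a)) := by
  have h01 : (0 : Fin 2) ≠ 1 := by decide
  have hs := altQ_swap h h01 (Fin.cons b (fun _ => a))
  have harg : (Fin.cons b (fun _ => a) : Fin 2 → V) ∘ (Equiv.swap 0 1) = Fin.cons a (fun _ => b) := by
    funext i
    refine Fin.cases ?_ (fun j => ?_) i
    · simp [Equiv.swap_apply_left]
    · rw [Subsingleton.elim j 0]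
      simp [Equiv.swap_apply_right]
  rw [← harg, hs]

lemma antisym_sum {A : Type*} [Fintype A] (F : A → A → ℚ) (hF : ∀ a b, F a b = - F b a) :
    ∑ a : A, ∑ b : A, F a b = 0 := by
  have h1 : ∑ a : A, ∑ b : A, F a b = ∑ a : A, ∑ b : A, F b a := Finset.sum_comm
  have h2 : ∑ a : A, ∑ b : A, F b a = - ∑ a : A, ∑ b : A, F a b := by
    rw [← Finset.sum_neg_distrib]
    refine Finset.sum_congr rfl fun a _ => ?_
    rw [← Finset.sum_neg_distrib]
    exact Finset.sum_congr rfl fun b _ => hF b a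
  linarith

lemma alt_of_antisym (F : V → V → ℚ) (hF : ∀ a b, F a b = - F b a) :
    IsAltChain 1 (fun f : Fin 2 → V => F (f 0) (f 1)) := by
  have hperm : ∀ σ : Equiv.Perm (Fin 2), σ = 1 ∨ σ = Equiv.swap 0 1 := by decide
  intro σ f
  rcases hperm σ with rfl | rfl
  · simp
  · have h01 : (0 : Fin 2) ≠ 1 := by decide
    rw [Equiv.Perm.sign_swap h01]
    show F ((f ∘ (Equiv.swap (0 : Fin 2) 1)) 0) ((f ∘ (Equiv.swap (0 : Fin 2) 1)) 1)
      = ((-1 : ℤˣ) : ℤ) • F (f 0) (f 1)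
    have e0 : (f ∘ (Equiv.swap (0 : Fin 2) 1)) 0 = f 1 := by simp
    have e1 : (f ∘ (Equiv.swap (0 : Fin 2) 1)) 1 = f 0 := by simp
    rw [e0, e1, hF (f 1) (f 0)]
    simp

lemma quad_decomp (G : (Fin 2 → V ⊕ V') → ℚ) :
    ∑ f : Fin 2 → V ⊕ V', G f
      = ((∑ a : V, ∑ b : V, G (Fin.cons (Sum.inl a) (fun _ => Sum.inl b)))
        + ∑ a : V', ∑ b : V, G (Fin.cons (Sum.inr a) (fun _ => Sum.inl b)))
        + ((∑ a : V', ∑ b : V', G (Fin.cons (Sum.inr a) (fun _ => Sum.inr b)))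
        + ∑ a : V, ∑ b : V', G (Fin.cons (Sum.inl a) (fun _ => Sum.inr b))) := by
  rw [sum_cons_split G]
  have inner : ∀ w : V ⊕ V', ∑ g : Fin 1 → V ⊕ V', G (Fin.cons w g)
      = (∑ b : V, G (Fin.cons w (fun _ => Sum.inl b)))
        + ∑ b : V', G (Fin.cons w (fun _ => Sum.inr b)) := by
    intro w
    rw [sum_fun1 (fun g => G (Fin.cons w g))]
    rw [Fintype.sum_sum_type]
  rw [Finset.sum_congr rfl (fun w _ => inner w), Fintype.sum_sum_type,
    Finset.sum_add_distrib, Finset.sum_add_distrib]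
  ring

lemma not_both_inj {e : ℕ} (v₀ : V) (v₀' : V') (h : Fin (e+3) → V ⊕ V') :
    ¬ (Function.Injective ((Sum.elim id (fun _ => v₀) : V ⊕ V' → V) ∘ h)
      ∧ Function.Injective ((Sum.elim (fun _ => v₀') id : V ⊕ V' → V') ∘ h)) := by
  rintro ⟨h1, h2⟩
  have hL : ∀ i j : Fin (e+3), i ≠ j → ∀ a b, h i = Sum.inl a → h j = Sum.inl b → False := by
    intro i j hij a b hi hj
    exact hij (h2 (by simp [Function.comp, hi, hj]))
  have hR : ∀ i j : Fin (e+3), i ≠ j → ∀ a b, h i = Sum.inr a → h j = Sum.inr b → False := by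
    intro i j hij a b hi hj
    exact hij (h1 (by simp [Function.comp, hi, hj]))
  have h01 : (⟨0, by omega⟩ : Fin (e+3)) ≠ ⟨1, by omega⟩ := by simp [Fin.ext_iff]
  have h02 : (⟨0, by omega⟩ : Fin (e+3)) ≠ ⟨2, by omega⟩ := by simp [Fin.ext_iff]
  have h12 : (⟨1, by omega⟩ : Fin (e+3)) ≠ ⟨2, by omega⟩ := by simp [Fin.ext_iff]
  rcases e0 : h ⟨0, by omega⟩ with a0 | b0 <;> rcases e1 : h ⟨1, by omega⟩ with a1 | b1 <;>
    rcases e2 : h ⟨2, by omega⟩ with a2 | b2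
  · exact hL _ _ h01 _ _ e0 e1
  · exact hL _ _ h01 _ _ e0 e1
  · exact hL _ _ h02 _ _ e0 e2
  · exact hR _ _ h12 _ _ e1 e2
  · exact hL _ _ h12 _ _ e1 e2
  · exact hR _ _ h02 _ _ e0 e2
  · exact hR _ _ h01 _ _ e0 e1
  · exact hR _ _ h01 _ _ e0 e1

end Aux6
section Aux7
set_option linter.unusedSectionVars false
set_option maxHeartbeats 1000000
open Finset Function

variable {V : Type*} [Fintype V] [DecidableEq V] {V' : Type*} [Fintype V'] [DecidableEq V']

lemma cons1_one {W : Type*} (v : W) (g : Fin 1 → W) : (Fin.cons v g : Fin 2 → W) 1 = g 0 := by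
  have h : (1 : Fin 2) = Fin.succ 0 := rfl
  rw [h, Fin.cons_succ]

lemma split_zero {K : (Fin 1 → V) → ℤ} {K' : (Fin 1 → V') → ℤ}
    (hKcl : bdry K Fin.elim0 = 0)
    {α : (Fin 2 → V ⊕ V') → ℚ} (halt : IsAltChain 1 α)
    (hbd : ∀ g : Fin 1 → V ⊕ V', bdry α g
      = pushChain Sum.inl (fun h => (K h : ℚ)) g + pushChain Sum.inr (fun h => (K' h : ℚ)) g) :
    ∃ β : (Fin 2 → V) → ℚ, IsAltChain 1 β ∧ (∀ g, bdry β g = (K g : ℚ)) ∧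
      ∑ f : Fin 2 → V, |β f| ≤
        (∑ a : V, ∑ b : V, |α (Fin.cons (Sum.inl a) (fun _ => Sum.inl b))|)
        + ∑ a : V', ∑ b : V, |α (Fin.cons (Sum.inr a) (fun _ => Sum.inl b))| := by
  classical
  set t : V → ℚ := fun x => ∑ v' : V', α (Fin.cons (Sum.inr v') (fun _ => Sum.inl x)) with ht
  have hdiv : ∀ x : V, (∑ v : V, α (Fin.cons (Sum.inl v) (fun _ => Sum.inl x))) + t x
      = (K (fun _ => x) : ℚ) := by
    intro x
    have hb := hbd (fun _ => Sum.inl x)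
    unfold bdry at hb
    rw [Fintype.sum_sum_type] at hb
    have h1 : pushChain Sum.inl (fun h => (K h : ℚ)) (fun _ => Sum.inl x)
        = (K (fun _ => x) : ℚ) :=
      pushChain_inj_apply (q := (Sum.inl : V → V ⊕ V')) Sum.inl_injective _ (fun _ => x)
    have h2 : pushChain Sum.inr (fun h => (K' h : ℚ)) (fun _ => Sum.inl x) = 0 :=
      pushChain_eq_zero (fun g hg => Sum.inr_ne_inl (congrFun hg 0))
    rw [h1, h2, add_zero] at hb
    exact hb
  have hmassLL : ∑ f : Fin 2 → V, |α (Sum.inl ∘ f)|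
      = ∑ a : V, ∑ b : V, |α (Fin.cons (Sum.inl a) (fun _ => Sum.inl b))| := by
    rw [sum_cons_split (fun f : Fin 2 → V => |α (Sum.inl ∘ f)|)]
    refine Finset.sum_congr rfl fun a _ => ?_
    rw [sum_fun1 (fun g : Fin 1 → V => |α (Sum.inl ∘ Fin.cons a g)|)]
    refine Finset.sum_congr rfl fun b _ => ?_
    rw [show (Sum.inl ∘ Fin.cons a (fun _ => b) : Fin 2 → V ⊕ V')
      = Fin.cons (Sum.inl a) (fun _ => Sum.inl b) from Fin.comp_cons _ _ _]
  have hpull : ∀ x : V, bdry (fun f : Fin 2 → V => α (Sum.inl ∘ f)) (fun _ => x)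
      = ∑ v : V, α (Fin.cons (Sum.inl v) (fun _ => Sum.inl x)) := by
    intro x
    unfold bdry
    refine Finset.sum_congr rfl fun v _ => ?_
    show α (Sum.inl ∘ Fin.cons v (fun _ => x)) = _
    exact congrArg α (Fin.comp_cons _ _ _)
  have hRLnonneg : (0:ℚ) ≤ ∑ a : V', ∑ b : V, |α (Fin.cons (Sum.inr a) (fun _ => Sum.inl b))| :=
    Finset.sum_nonneg fun a _ => Finset.sum_nonneg fun b _ => abs_nonneg _
  have hsumt : ∑ x : V, t x = 0 := by
    have hP : ∑ x : V, ∑ v : V, α (Fin.cons (Sum.inl v) (fun _ => Sum.inl x)) = 0 := by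
      rw [Finset.sum_comm]
      exact antisym_sum (fun v x : V => α (Fin.cons (Sum.inl v) (fun _ => Sum.inl x)))
        (fun a b => pair_swap halt (Sum.inl a) (Sum.inl b))
    have hKsum : ∑ x : V, (K (fun _ => x) : ℚ) = 0 := by
      unfold bdry at hKcl
      have hcast : ((∑ v : V, K (Fin.cons v Fin.elim0) : ℤ) : ℚ) = 0 := by
        rw [hKcl]; norm_num
      push_cast at hcast
      rw [← hcast]
      refine Finset.sum_congr rfl fun x _ => ?_
      have hfe : (fun _ : Fin 1 => x) = Fin.cons x Fin.elim0 := by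
        funext i
        rw [Subsingleton.elim i 0]
        simp
      rw [hfe]
    have := Finset.sum_congr rfl (fun x (_ : x ∈ univ) => (hdiv x).symm)
    rw [Finset.sum_add_distrib] at this
    rw [hKsum, hP] at this
    linarith
  set tp : V → ℚ := fun x => max (t x) 0 with htp
  set tn : V → ℚ := fun x => max (-t x) 0 with htn
  have htp0 : ∀ x, 0 ≤ tp x := fun x => le_max_right _ _
  have htn0 : ∀ x, 0 ≤ tn x := fun x => le_max_right _ _
  have hsplit : ∀ x, t x = tp x - tn x := by
    intro x
    rcases le_total (t x) 0 with h | h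
    · rw [show tp x = 0 from max_eq_right h, show tn x = -t x from max_eq_left (by linarith)]
      ring
    · rw [show tp x = t x from max_eq_left h, show tn x = 0 from max_eq_right (by linarith)]
      ring
  have habs : ∀ x, |t x| = tp x + tn x := by
    intro x
    rcases le_total (t x) 0 with h | h
    · rw [abs_of_nonpos h, show tp x = 0 from max_eq_right h,
        show tn x = -t x from max_eq_left (by linarith)]
      ring
    · rw [abs_of_nonneg h, show tp x = t x from max_eq_left h,
        show tn x = 0 from max_eq_right (by linarith)]
      ring
  set T : ℚ := ∑ x : V, tp x with hT
  have hTn : ∑ x : V, tn x = T := by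
    have h1 : ∑ x : V, (tp x - tn x) = 0 := by
      rw [← Finset.sum_congr rfl (fun x (_ : x ∈ univ) => hsplit x)]
      exact hsumt
    rw [Finset.sum_sub_distrib] at h1
    rw [hT]
    linarith
  have hT0 : 0 ≤ T := Finset.sum_nonneg fun x _ => htp0 x
  have htmass : ∑ x : V, |t x|
      ≤ ∑ a : V', ∑ b : V, |α (Fin.cons (Sum.inr a) (fun _ => Sum.inl b))| := by
    rw [Finset.sum_comm]
    refine Finset.sum_le_sum fun x _ => ?_
    exact Finset.abs_sum_le_sum_abs _ _
  by_cases hTz : T = 0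
  · have htpz : ∀ x, tp x = 0 := by
      intro x
      have := (Finset.sum_eq_zero_iff_of_nonneg (fun x (_ : x ∈ univ) => htp0 x)).mp
        (by rw [← hT]; exact hTz)
      exact this x (Finset.mem_univ x)
    have htnz : ∀ x, tn x = 0 := by
      intro x
      have := (Finset.sum_eq_zero_iff_of_nonneg (fun x (_ : x ∈ univ) => htn0 x)).mp
        (by rw [hTn]; exact hTz)
      exact this x (Finset.mem_univ x)
    have htz : ∀ x, t x = 0 := fun x => by rw [hsplit x, htpz x, htnz x]; ring
    refine ⟨fun f => α (Sum.inl ∘ f), altQ_pullback Sum.inl halt, ?_, ?_⟩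
    · intro g
      obtain ⟨x, rfl⟩ : ∃ x : V, g = fun _ => x :=
        ⟨g 0, funext fun i => by rw [Subsingleton.elim i 0]⟩
      rw [hpull x]
      have h1 := hdiv x
      have h2 := htz x
      linarith
    · rw [hmassLL]
      linarith
  · have hTpos : 0 < T := lt_of_le_of_ne hT0 (Ne.symm hTz)
    set γ : (Fin 2 → V) → ℚ :=
      fun f => (tp (f 1) * tn (f 0) - tp (f 0) * tn (f 1)) / T with hγ
    have hγalt : IsAltChain 1 γ :=
      alt_of_antisym (fun a b => (tp b * tn a - tp a * tn b) / T) (fun a b => by ring)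
    have hγcons : ∀ (v x : V), γ (Fin.cons v (fun _ => x)) = (tp x * tn v - tp v * tn x) / T := by
      intro v x
      rw [hγ]
      have e1 : (Fin.cons v (fun _ => x) : Fin 2 → V) 1 = x := by
        rw [cons1_one]
      have e0 : (Fin.cons v (fun _ => x) : Fin 2 → V) 0 = v := by simp
      simp only [e1, e0]
    have hγbd : ∀ x : V, bdry γ (fun _ => x) = t x := by
      intro x
      unfold bdry
      rw [Finset.sum_congr rfl (fun v (_ : v ∈ univ) => hγcons v x)]
      rw [← Finset.sum_div, Finset.sum_sub_distrib, ← Finset.mul_sum, ← Finset.sum_mul]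
      rw [hTn, ← hT, hsplit x]
      field_simp
    refine ⟨fun f => α (Sum.inl ∘ f) + γ f, altQ_add (altQ_pullback Sum.inl halt) hγalt, ?_, ?_⟩
    · intro g
      obtain ⟨x, rfl⟩ : ∃ x : V, g = fun _ => x :=
        ⟨g 0, funext fun i => by rw [Subsingleton.elim i 0]⟩
      rw [bdry_add, hpull x, hγbd x]
      exact hdiv x
    · have step1 : ∑ f : Fin 2 → V, |α (Sum.inl ∘ f) + γ f|
          ≤ (∑ f : Fin 2 → V, |α (Sum.inl ∘ f)|) + ∑ f : Fin 2 → V, |γ f| := by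
        rw [← Finset.sum_add_distrib]
        exact Finset.sum_le_sum fun f _ => abs_add_le _ _
      have hγmass : ∑ f : Fin 2 → V, |γ f| ≤ 2 * T := by
        have h1 : ∑ f : Fin 2 → V, |γ f|
            = ∑ a : V, ∑ b : V, |γ (Fin.cons a (fun _ => b))| := by
          rw [sum_cons_split (fun f => |γ f|)]
          refine Finset.sum_congr rfl fun a _ => ?_
          rw [sum_fun1 (fun g => |γ (Fin.cons a g)|)]
        have h2 : ∀ a b : V, |γ (Fin.cons a (fun _ => b))|
            ≤ (tp b * tn a + tp a * tn b) / T := by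
          intro a b
          rw [hγcons a b, abs_div, abs_of_pos hTpos]
          have hnum : |tp b * tn a - tp a * tn b| ≤ tp b * tn a + tp a * tn b := by
            calc |tp b * tn a - tp a * tn b| ≤ |tp b * tn a| + |tp a * tn b| := abs_sub _ _
              _ = tp b * tn a + tp a * tn b := by
                  rw [abs_of_nonneg (mul_nonneg (htp0 b) (htn0 a)),
                    abs_of_nonneg (mul_nonneg (htp0 a) (htn0 b))]
          exact (div_le_div_iff_of_pos_right hTpos).mpr hnum
        have h3 : ∀ a : V, ∑ b : V, (tp b * tn a + tp a * tn b) / T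
            = (T * tn a + tp a * T) / T := by
          intro a
          rw [← Finset.sum_div, Finset.sum_add_distrib, ← Finset.sum_mul, ← Finset.mul_sum,
            hTn, ← hT]
        have h4 : ∑ a : V, (T * tn a + tp a * T) / T = (T * T + T * T) / T := by
          rw [← Finset.sum_div, Finset.sum_add_distrib, ← Finset.mul_sum, ← Finset.sum_mul,
            hTn, ← hT]
        calc ∑ f : Fin 2 → V, |γ f|
            = ∑ a : V, ∑ b : V, |γ (Fin.cons a (fun _ => b))| := h1
          _ ≤ ∑ a : V, ∑ b : V, (tp b * tn a + tp a * tn b) / T :=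
              Finset.sum_le_sum fun a _ => Finset.sum_le_sum fun b _ => h2 a b
          _ = (T * T + T * T) / T := by
              rw [Finset.sum_congr rfl (fun a (_ : a ∈ univ) => h3 a), h4]
          _ = 2 * T := by field_simp; ring
      have h2T : 2 * T ≤ ∑ a : V', ∑ b : V, |α (Fin.cons (Sum.inr a) (fun _ => Sum.inl b))| := by
        have : ∑ x : V, |t x| = 2 * T := by
          rw [Finset.sum_congr rfl (fun x (_ : x ∈ univ) => habs x), Finset.sum_add_distrib,
            hTn, ← hT]
          ring
        linarith
      rw [hmassLL] at step1
      linarith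
end Aux7
section Aux8
set_option linter.unusedSectionVars false
set_option maxHeartbeats 1000000
open Finset Function

variable {V : Type*} [Fintype V] [DecidableEq V] {V' : Type*} [Fintype V'] [DecidableEq V']

lemma split_pos {e : ℕ} (v₀ : V)
    {cK : (Fin (e+2) → V) → ℚ} {cK' : (Fin (e+2) → V') → ℚ}
    (hcK' : IsAltChain (e+1) cK')
    {α : (Fin (e+3) → V ⊕ V') → ℚ} (halt : IsAltChain (e+2) α)
    (hbd : ∀ g : Fin (e+2) → V ⊕ V', bdry α g
      = pushChain Sum.inl cK g + pushChain Sum.inr cK' g) :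
    ∃ β : (Fin (e+3) → V) → ℚ, IsAltChain (e+2) β ∧ (∀ g, bdry β g = cK g) ∧
      ∑ f : Fin (e+3) → V, |β f| ≤ ∑ h : Fin (e+3) → V ⊕ V',
        (if Function.Injective ((Sum.elim id (fun _ => v₀) : V ⊕ V' → V) ∘ h)
          then |α h| else 0) := by
  classical
  set r : V ⊕ V' → V := Sum.elim id (fun _ => v₀) with hr
  refine ⟨pushChain r α, pushChain_alt r halt, ?_, ?_⟩
  · intro g
    rw [bdry_pushChain r α g]
    have h1 : pushChain r (bdry α) g
        = pushChain r (fun g' => pushChain Sum.inl cK g' + pushChain Sum.inr cK' g') g :=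
      congrArg (fun c => pushChain r c g) (funext hbd)
    rw [h1, pushChain_addc]
    have h2 : pushChain r (pushChain Sum.inl cK) g = cK g := by
      rw [pushChain_comp]
      have hid : pushChain (r ∘ Sum.inl) cK g = pushChain id cK g := rfl
      rw [hid, pushChain_id]
    have h3 : pushChain r (pushChain Sum.inr cK') g = 0 := by
      rw [pushChain_comp]
      by_cases hg : g = fun _ => v₀
      · subst hg
        have hco : ∀ h : Fin (e+2) → V', ((r ∘ Sum.inr) ∘ h = fun _ => v₀) := fun h => rfl
        unfold pushChain
        rw [Finset.sum_congr rfl (fun h _ => if_pos (hco h))]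
        exact altQ_sum_zero hcK'
      · exact pushChain_eq_zero (fun h hh => absurd hh.symm hg)
    rw [h2, h3, add_zero]
  · have hstep : ∀ f : Fin (e+3) → V, |pushChain r α f|
        ≤ ∑ h : Fin (e+3) → V ⊕ V',
          (if r ∘ h = f ∧ Function.Injective f then |α h| else 0) := by
      intro f
      by_cases hfinj : Function.Injective f
      · calc |pushChain r α f| ≤ ∑ h, |if r ∘ h = f then α h else 0| :=
            Finset.abs_sum_le_sum_abs _ _
          _ = ∑ h : Fin (e+3) → V ⊕ V',
              (if r ∘ h = f ∧ Function.Injective f then |α h| else 0) := by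
            refine Finset.sum_congr rfl fun h _ => ?_
            by_cases hc : r ∘ h = f
            · simp [hc, hfinj]
            · simp [hc]
      · rw [altQ_zero_of_not_injective (pushChain_alt r halt) hfinj, abs_zero]
        refine Finset.sum_nonneg fun h _ => ?_
        split
        · exact abs_nonneg _
        · exact le_refl 0
    calc ∑ f : Fin (e+3) → V, |pushChain r α f|
        ≤ ∑ f : Fin (e+3) → V, ∑ h : Fin (e+3) → V ⊕ V',
            (if r ∘ h = f ∧ Function.Injective f then |α h| else 0) :=
          Finset.sum_le_sum fun f _ => hstep f
      _ = ∑ h : Fin (e+3) → V ⊕ V', ∑ f : Fin (e+3) → V,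
            (if r ∘ h = f ∧ Function.Injective f then |α h| else 0) := Finset.sum_comm
      _ = ∑ h : Fin (e+3) → V ⊕ V',
            (if Function.Injective (r ∘ h) then |α h| else 0) := by
          refine Finset.sum_congr rfl fun h _ => ?_
          rw [Finset.sum_eq_single (r ∘ h)]
          · by_cases hi : Function.Injective (r ∘ h) <;> simp [hi]
          · intro f _ hf
            exact if_neg (fun hc => hf hc.1.symm)
          · simp

lemma split_empty [IsEmpty V] {d : ℕ}
    {cK : (Fin (d+1) → V) → ℚ} {cK' : (Fin (d+1) → V') → ℚ}
    {α : (Fin (d+2) → V ⊕ V') → ℚ} (halt : IsAltChain (d+1) α)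
    (hbd : ∀ g : Fin (d+1) → V ⊕ V', bdry α g
      = pushChain Sum.inl cK g + pushChain Sum.inr cK' g) :
    ∃ (β : (Fin (d+2) → V) → ℚ) (β' : (Fin (d+2) → V') → ℚ),
      IsAltChain (d+1) β ∧ (∀ g, bdry β g = cK g) ∧
      IsAltChain (d+1) β' ∧ (∀ g, bdry β' g = cK' g) ∧
      (∑ f : Fin (d+2) → V, |β f|) + (∑ f : Fin (d+2) → V', |β' f|)
        ≤ ∑ f : Fin (d+2) → V ⊕ V', |α f| := by
  refine ⟨fun _ => 0, fun g => α (Sum.inr ∘ g), fun σ f => by simp,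
    fun g => ((‹IsEmpty V›).false (g 0)).elim, altQ_pullback Sum.inr halt, ?_, ?_⟩
  · intro g
    have hb := hbd (Sum.inr ∘ g)
    have hsplit : bdry α (Sum.inr ∘ g) = bdry (fun f => α (Sum.inr ∘ f)) g := by
      unfold bdry
      rw [Fintype.sum_sum_type]
      have h0 : ∑ v : V, α (Fin.cons (Sum.inl v) (Sum.inr ∘ g)) = 0 := by
        rw [Finset.univ_eq_empty, Finset.sum_empty]
      rw [h0, zero_add]
      refine Finset.sum_congr rfl fun v' _ => ?_
      exact (congrArg α (Fin.comp_cons Sum.inr v' g)).symm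
    rw [← hsplit, hb]
    have h1 : pushChain Sum.inl cK (Sum.inr ∘ g) = 0 :=
      pushChain_eq_zero (fun h hh => Sum.inl_ne_inr (congrFun hh 0))
    have h2 : pushChain Sum.inr cK' (Sum.inr ∘ g) = cK' g :=
      pushChain_inj_apply (q := (Sum.inr : V' → V ⊕ V')) Sum.inr_injective _ g
    rw [h1, h2, zero_add]
  · have h1 : ∑ f : Fin (d+2) → V, |(0:ℚ)| = 0 := by simp
    have h2 : ∑ f : Fin (d+2) → V', |α (Sum.inr ∘ f)| ≤ ∑ f : Fin (d+2) → V ⊕ V', |α f| :=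
      sum_abs_pullback_le (q := (Sum.inr : V' → V ⊕ V')) Sum.inr_injective α
    calc (∑ _f : Fin (d+2) → V, |(0:ℚ)|) + ∑ f : Fin (d+2) → V', |α (Sum.inr ∘ f)|
        = ∑ f : Fin (d+2) → V', |α (Sum.inr ∘ f)| := by rw [h1, zero_add]
      _ ≤ ∑ f : Fin (d+2) → V ⊕ V', |α f| := h2

end Aux8
section Aux9
set_option linter.unusedSectionVars false
set_option maxHeartbeats 1000000
open Finset Function

variable {V : Type*} [Fintype V] [DecidableEq V] {V' : Type*} [Fintype V'] [DecidableEq V']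

lemma split_main {d : ℕ} (K : (Fin (d+1) → V) → ℤ) (K' : (Fin (d+1) → V') → ℤ)
    (hK : IsAdmissible d K) (hK' : IsAdmissible d K')
    {α : (Fin (d+2) → V ⊕ V') → ℚ} (halt : IsAltChain (d+1) α)
    (hbd : ∀ g, bdry α g = pushChain Sum.inl (fun h => (K h : ℚ)) g
      + pushChain Sum.inr (fun h => (K' h : ℚ)) g) :
    ∃ (β : (Fin (d+2) → V) → ℚ) (β' : (Fin (d+2) → V') → ℚ),
      IsAltChain (d+1) β ∧ (∀ g, bdry β g = (K g : ℚ)) ∧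
      IsAltChain (d+1) β' ∧ (∀ g, bdry β' g = (K' g : ℚ)) ∧
      (∑ f : Fin (d+2) → V, |β f|) + (∑ f : Fin (d+2) → V', |β' f|)
        ≤ ∑ f : Fin (d+2) → V ⊕ V', |α f| := by
  classical
  set αs : (Fin (d+2) → V' ⊕ V) → ℚ := fun f => α (Sum.swap ∘ f) with hαs
  have halts : IsAltChain (d+1) αs := altQ_pullback Sum.swap halt
  have hbds : ∀ g : Fin (d+1) → V' ⊕ V, bdry αs g
      = pushChain Sum.inl (fun h => (K' h : ℚ)) g + pushChain Sum.inr (fun h => (K h : ℚ)) g := by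
    intro g
    rw [show bdry αs g = bdry α (Sum.swap ∘ g) from bdry_swapped α g, hbd (Sum.swap ∘ g),
      pushChain_inl_swap (fun h => (K h : ℚ)) g, pushChain_inr_swap (fun h => (K' h : ℚ)) g]
    ring
  have hswapnorm : ∑ f : Fin (d+2) → V' ⊕ V, |αs f| = ∑ f : Fin (d+2) → V ⊕ V', |α f| :=
    sum_abs_swapped α
  rcases isEmpty_or_nonempty V with hV | hV
  · exact split_empty halt hbd
  rcases isEmpty_or_nonempty V' with hV' | hV'
  · obtain ⟨β', β, h1, h2, h3, h4, h5⟩ := split_empty (V := V') (V' := V) halts hbds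
    refine ⟨β, β', h3, h4, h1, h2, ?_⟩
    rw [← hswapnorm]
    linarith
  rcases d with _ | e
  · obtain ⟨β, hb1, hb2, hb3⟩ := split_zero (hK.closed Fin.elim0) halt hbd
    obtain ⟨β', hb1', hb2', hb3'⟩ := split_zero (hK'.closed Fin.elim0) halts hbds
    refine ⟨β, β', hb1, hb2, hb1', hb2', ?_⟩
    have e1 : ∑ a : V', ∑ b : V', |αs (Fin.cons (Sum.inl a) (fun _ => Sum.inl b))|
        = ∑ a : V', ∑ b : V', |α (Fin.cons (Sum.inr a) (fun _ => Sum.inr b))| := by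
      refine Finset.sum_congr rfl fun a _ => Finset.sum_congr rfl fun b _ => ?_
      have : αs (Fin.cons (Sum.inl a) (fun _ => Sum.inl b))
          = α (Fin.cons (Sum.inr a) (fun _ => Sum.inr b)) :=
        congrArg α (Fin.comp_cons Sum.swap (Sum.inl a) (fun _ => Sum.inl b))
      rw [this]
    have e2 : ∑ a : V, ∑ b : V', |αs (Fin.cons (Sum.inr a) (fun _ => Sum.inl b))|
        = ∑ a : V, ∑ b : V', |α (Fin.cons (Sum.inl a) (fun _ => Sum.inr b))| := by
      refine Finset.sum_congr rfl fun a _ => Finset.sum_congr rfl fun b _ => ?_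
      have : αs (Fin.cons (Sum.inr a) (fun _ => Sum.inl b))
          = α (Fin.cons (Sum.inl a) (fun _ => Sum.inr b)) :=
        congrArg α (Fin.comp_cons Sum.swap (Sum.inr a) (fun _ => Sum.inl b))
      rw [this]
    rw [e1, e2] at hb3'
    have hq := quad_decomp (fun f => |α f|)
    linarith
  · obtain ⟨v₀⟩ := hV
    obtain ⟨v₀'⟩ := hV'
    obtain ⟨β, hb1, hb2, hb3⟩ := split_pos v₀ (altQ_cast hK'.chain) halt hbd
    obtain ⟨β', hb1', hb2', hb3'⟩ := split_pos v₀' (altQ_cast hK.chain) halts hbds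
    refine ⟨β, β', hb1, hb2, hb1', hb2', ?_⟩
    have hre : ∑ h : Fin (e+3) → V' ⊕ V,
        (if Function.Injective ((Sum.elim id (fun _ => v₀') : V' ⊕ V → V') ∘ h)
          then |αs h| else 0)
        = ∑ h : Fin (e+3) → V ⊕ V',
        (if Function.Injective ((Sum.elim (fun _ => v₀') id : V ⊕ V' → V') ∘ h)
          then |α h| else 0) := by
      refine Fintype.sum_equiv
        (Equiv.arrowCongr (Equiv.refl (Fin (e+3))) (Equiv.sumComm V' V)) _ _ fun h => ?_
      show (if Function.Injective ((Sum.elim id (fun _ => v₀') : V' ⊕ V → V') ∘ h)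
          then |α (Sum.swap ∘ h)| else 0)
        = (if Function.Injective ((Sum.elim (fun _ => v₀') id : V ⊕ V' → V') ∘ (Sum.swap ∘ h))
          then |α (Sum.swap ∘ h)| else 0)
      have hfn : (Sum.elim (fun _ => v₀') id : V ⊕ V' → V') ∘ (Sum.swap ∘ h)
          = (Sum.elim id (fun _ => v₀') : V' ⊕ V → V') ∘ h := by
        funext x
        rcases hhx : h x with a | b <;> simp [hhx]
      rw [hfn]
    rw [hre] at hb3'
    have hpoint : ∀ h : Fin (e+3) → V ⊕ V',
        (if Function.Injective ((Sum.elim id (fun _ => v₀) : V ⊕ V' → V) ∘ h)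
          then |α h| else 0)
        + (if Function.Injective ((Sum.elim (fun _ => v₀') id : V ⊕ V' → V') ∘ h)
          then |α h| else 0) ≤ |α h| := by
      intro h
      have hnb := not_both_inj v₀ v₀' h
      by_cases hP : Function.Injective ((Sum.elim id (fun _ => v₀) : V ⊕ V' → V) ∘ h) <;>
        by_cases hQ : Function.Injective ((Sum.elim (fun _ => v₀') id : V ⊕ V' → V') ∘ h)
      · exact absurd ⟨hP, hQ⟩ hnb
      · simp [hP, hQ]
      · simp [hP, hQ]
      · simp [hP, hQ, abs_nonneg]
    calc (∑ f : Fin (e+3) → V, |β f|) + ∑ f : Fin (e+3) → V', |β' f|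
        ≤ (∑ h : Fin (e+3) → V ⊕ V',
            (if Function.Injective ((Sum.elim id (fun _ => v₀) : V ⊕ V' → V) ∘ h)
              then |α h| else 0))
          + ∑ h : Fin (e+3) → V ⊕ V',
            (if Function.Injective ((Sum.elim (fun _ => v₀') id : V ⊕ V' → V') ∘ h)
              then |α h| else 0) := add_le_add hb3 hb3'
      _ = ∑ h : Fin (e+3) → V ⊕ V',
            ((if Function.Injective ((Sum.elim id (fun _ => v₀) : V ⊕ V' → V) ∘ h)
              then |α h| else 0)
            + (if Function.Injective ((Sum.elim (fun _ => v₀') id : V ⊕ V' → V') ∘ h)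
              then |α h| else 0)) := by rw [← Finset.sum_add_distrib]
      _ ≤ ∑ h : Fin (e+3) → V ⊕ V', |α h| := Finset.sum_le_sum fun h _ => hpoint h

end Aux9
set_option maxHeartbeats 1000000 in
/-- Additivity of `V_ℚ` under disjoint union. -/
theorem stmt5 {V V' : Type*} [Fintype V] [DecidableEq V]
    [Fintype V'] [DecidableEq V'] (d : ℕ)
    (K : (Fin (d + 1) → V) → ℤ) (K' : (Fin (d + 1) → V') → ℤ)
    (hK : IsAdmissible d K) (hK' : IsAdmissible d K') :
    VQ d (unionChain K K') = VQ d K + VQ d K' := by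
  classical
  refine le_antisymm (VQ_union_le K K' hK hK') ?_
  have hcast : (fun f : Fin (d+1) → V ⊕ V' => ((unionChain K K' f : ℤ) : ℚ))
      = fun f => pushChain Sum.inl (fun g => (K g : ℚ)) f
        + pushChain Sum.inr (fun g => (K' g : ℚ)) f :=
    funext (cast_unionChain K K')
  have hUalt : IsAltChain d (fun f : Fin (d+1) → V ⊕ V' => ((unionChain K K' f : ℤ) : ℚ)) := by
    rw [hcast]
    exact altQ_add (pushChain_alt Sum.inl (altQ_cast hK.chain))
      (pushChain_alt Sum.inr (altQ_cast hK'.chain))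
  have hUcl : ∀ g, bdry (fun f : Fin (d+1) → V ⊕ V' => ((unionChain K K' f : ℤ) : ℚ)) g = 0 := by
    intro g
    rw [hcast, bdry_add, bdry_pushChain, bdry_pushChain]
    have hzK : bdry (fun h : Fin (d+1) → V => (K h : ℚ)) = fun _ => (0:ℚ) :=
      funext fun g' => by rw [bdry_cast, hK.closed g']; norm_num
    have hzK' : bdry (fun h : Fin (d+1) → V' => (K' h : ℚ)) = fun _ => (0:ℚ) :=
      funext fun g' => by rw [bdry_cast, hK'.closed g']; norm_num
    rw [hzK, hzK']
    have hz1 : pushChain Sum.inl (fun _ : Fin d → V => (0:ℚ)) g = 0 :=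
      Finset.sum_eq_zero fun h _ => by split <;> rfl
    have hz2 : pushChain Sum.inr (fun _ : Fin d → V' => (0:ℚ)) g = 0 :=
      Finset.sum_eq_zero fun h _ => by split <;> rfl
    rw [hz1, hz2, add_zero]
  obtain ⟨A, hA1, hA2⟩ := exists_fill (fun f => ((unionChain K K' f : ℤ) : ℚ)) hUalt hUcl
  apply le_VQ (unionChain K K') ⟨A, hA1, hA2⟩
  intro α h1 h2
  have hbd : ∀ g, bdry α g = pushChain Sum.inl (fun h => (K h : ℚ)) g
      + pushChain Sum.inr (fun h => (K' h : ℚ)) g := fun g => by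
    rw [h2 g, cast_unionChain K K' g]
  obtain ⟨β, β', hb1, hb2, hb1', hb2', hsum⟩ := split_main K K' hK hK' h1 hbd
  have l1 : VQ d K ≤ normQ β := VQ_le K hb1 hb2
  have l2 : VQ d K' ≤ normQ β' := VQ_le K' hb1' hb2'
  have l3 : normQ β + normQ β' ≤ normQ α := by
    rw [normQ_eq, normQ_eq, normQ_eq, ← add_div]
    have hF : (0:ℝ) < (Nat.factorial (d+1+1) : ℝ) := by positivity
    exact (div_le_div_iff_of_pos_right hF).mpr (by exact_mod_cast hsum)
  linarith
end
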